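/- arXiv:2004.02483 — 10 statements merged into one kernel-verified Lean document; each statement's English description precedes it below -/
import Mathlib

section
/- Any smooth function u : J → ℂ satisfying (μ(r) r² (u/r)′)′ = 0 on all of J is of the form u(r) = c·r for some constant c ∈ ℂ; conversely every such u solves the equation. (The kernel of the stationary operator at σ = s = m = 0 in the spherically symmetric sector is exactly ℂ·r.) -/
open Set Filter Topology

lemma aux_const {s : Set ℝ} (hs : IsOpen s) (hconv : Convex ℝ s) {f : ℝ → ℂ}
    (hdiff : ∀ x ∈ s, DifferentiableAt ℝ f x) (hder : ∀ x ∈ s, deriv f x = 0)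
    {x y : ℝ} (hx : x ∈ s) (hy : y ∈ s) : f x = f y := by
  apply hconv.is_const_of_fderivWithin_eq_zero
    (fun z hz => (hdiff z hz).differentiableWithinAt) _ hx hy
  intro z hz
  rw [fderivWithin_of_isOpen hs hz]
  have h1 : HasDerivAt f 0 z := by
    have := (hdiff z hz).hasDerivAt
    rwa [hder z hz] at this
  rw [h1.hasFDerivAt.fderiv]
  ext
  simp

lemma aux_ofReal_hasDerivAt (x : ℝ) : HasDerivAt (fun t : ℝ => (t : ℂ)) 1 x := by
  simpa using (hasDerivAt_id x).ofReal_comp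

lemma aux_ofReal_contDiff : ContDiff ℝ (⊤ : ℕ∞) (fun t : ℝ => (t : ℂ)) :=
  Complex.ofRealCLM.contDiff

-- part 2 inner derivative
lemma aux_part2 (a : ℂ) (t : ℝ) : deriv (fun x : ℝ => (a * (x : ℂ)) / (x : ℂ)) t = 0 := by
  by_cases ht : t = 0
  · subst ht
    by_cases ha : a = 0
    · simp [ha]
    · apply deriv_zero_of_not_differentiableAt
      intro hdiff
      have hc : Filter.Tendsto (fun x : ℝ => (a * (x : ℂ)) / (x : ℂ)) (nhdsWithin 0 {(0:ℝ)}ᶜ)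
          (nhds ((a * ((0:ℝ):ℂ)) / ((0:ℝ):ℂ))) :=
        (hdiff.continuousAt.continuousWithinAt).tendsto
      have h1 : Filter.Tendsto (fun x : ℝ => (a * (x : ℂ)) / (x : ℂ)) (nhdsWithin 0 {(0:ℝ)}ᶜ)
          (nhds a) := by
        apply Filter.Tendsto.congr' _ tendsto_const_nhds
        filter_upwards [self_mem_nhdsWithin] with x hx
        have hx' : (x : ℂ) ≠ 0 := Complex.ofReal_ne_zero.mpr hx
        field_simp
      have := tendsto_nhds_unique h1 hc
      simp at this
      exact ha this
  · have hev : (fun x : ℝ => (a * (x : ℂ)) / (x : ℂ)) =ᶠ[nhds t] fun _ => a := by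
      filter_upwards [isOpen_compl_singleton.mem_nhds (by simpa using ht : t ∈ ({(0:ℝ)}ᶜ : Set ℝ))] with x hx
      have hx' : (x : ℂ) ≠ 0 := Complex.ofReal_ne_zero.mpr (by simpa using hx)
      field_simp
    rw [hev.deriv_eq]
    simp

/-- any smooth `u : J → ℂ` with `(μ r²(u/r)′)′ = 0` on `J` equals `c·r` for
some constant `c ∈ ℂ`, and conversely every `u(r) = c·r` solves the equation
(the spherically symmetric kernel of `P̂(0,0,0)` is exactly `ℂ·r`). -/
theorem stmt2 (rm rp η₀ : ℝ) (hrm : 0 < rm) (hrmp : rm < rp) (hη : 0 < η₀)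
    (J : Set ℝ) (hJ : J = Set.Ioo (rm - η₀) (rp + η₀))
    (μ : ℝ → ℝ) (hμ : ContDiffOn ℝ (⊤ : ℕ∞) μ J)
    (hμm : μ rm = 0) (hμp : μ rp = 0)
    (hμm' : deriv μ rm ≠ 0) (hμp' : deriv μ rp ≠ 0)
    (hμpos : ∀ r ∈ Set.Ioo rm rp, 0 < μ r)
    (hμne : ∀ r ∈ J \ Set.Icc rm rp, μ r ≠ 0) :
    (∀ u : ℝ → ℂ, ContDiffOn ℝ (⊤ : ℕ∞) u J →
      (∀ r ∈ J,
        deriv (fun t : ℝ => ((μ t * t ^ 2 : ℝ) : ℂ) * deriv (fun x : ℝ => u x / (x : ℂ)) t) r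
          = 0) →
      ∃ a : ℂ, ∀ r ∈ J, u r = a * (r : ℂ)) ∧
    (∀ a : ℂ, ∀ r ∈ J,
      deriv (fun t : ℝ =>
        ((μ t * t ^ 2 : ℝ) : ℂ) * deriv (fun x : ℝ => (a * (x : ℂ)) / (x : ℂ)) t) r = 0) := by
  subst hJ
  constructor
  · intro u hu hode
    have hJo : IsOpen (Ioo (rm - η₀) (rp + η₀)) := isOpen_Ioo
    have hrmJ : rm ∈ Ioo (rm - η₀) (rp + η₀) := ⟨by linarith, by linarith⟩
    have hrpJ : rp ∈ Ioo (rm - η₀) (rp + η₀) := ⟨by linarith, by linarith⟩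
    set v : ℝ → ℂ := fun x => u x / (x : ℂ) with hvdef
    set g : ℝ → ℂ := fun t => ((μ t * t ^ 2 : ℝ) : ℂ) * deriv v t with hgdef
    have hudiff : ∀ x ∈ Ioo (rm - η₀) (rp + η₀), DifferentiableAt ℝ u x := fun x hx =>
      (hu.contDiffAt (hJo.mem_nhds hx)).differentiableAt (by simp)
    set s : Set ℝ := Ioo (rm - η₀) (rp + η₀) ∩ {x | x ≠ 0} with hsdef
    have hso : IsOpen s := hJo.inter isOpen_compl_singleton
    have hvs : ContDiffOn ℝ (⊤ : ℕ∞) v s := by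
      have h1 : ContDiffOn ℝ (⊤ : ℕ∞) (fun x : ℝ => ((x : ℂ))⁻¹) s :=
        (aux_ofReal_contDiff.contDiffOn).inv (fun x hx => Complex.ofReal_ne_zero.mpr hx.2)
      exact ((hu.mono inter_subset_left).mul h1).congr (fun x hx => div_eq_mul_inv _ _)
    have hdvs : ContDiffOn ℝ (⊤ : ℕ∞) (deriv v) s := hvs.deriv_of_isOpen hso (by simp)
    have hgs : ContDiffOn ℝ (⊤ : ℕ∞) g s :=
      ((aux_ofReal_contDiff.comp_contDiffOn
        ((hμ.mono inter_subset_left).mul ((contDiff_id.pow 2).contDiffOn)))).mul hdvs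
    have hgdiff : ∀ x ∈ s, DifferentiableAt ℝ g x := fun x hx =>
      (hgs.contDiffAt (hso.mem_nhds hx)).differentiableAt (by simp)
    -- μ nonzero off {rm, rp}
    have hμne' : ∀ x ∈ Ioo (rm - η₀) (rp + η₀), x ≠ rm → x ≠ rp → μ x ≠ 0 := by
      intro x hx h1 h2
      by_cases hin : x ∈ Icc rm rp
      · exact ne_of_gt (hμpos x ⟨lt_of_le_of_ne hin.1 (Ne.symm h1), lt_of_le_of_ne hin.2 h2⟩)
      · exact hμne x ⟨hx, hin⟩
    -- positive part
    set Jp : Set ℝ := Ioo (max (rm - η₀) 0) (rp + η₀) with hJpdef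
    have hJpsub : Jp ⊆ s := by
      intro x hx
      have hx0 : 0 < x := lt_of_le_of_lt (le_max_right _ _) hx.1
      exact ⟨⟨lt_of_le_of_lt (le_max_left _ _) hx.1, hx.2⟩, ne_of_gt hx0⟩
    have hrmJp : rm ∈ Jp := ⟨max_lt (by linarith) hrm, by linarith⟩
    have hrpJp : rp ∈ Jp := ⟨max_lt (by linarith) (by linarith), by linarith⟩
    have hgJp0 : ∀ x ∈ Jp, g x = 0 := by
      have hconst : ∀ x ∈ Jp, g x = g rm :=
        fun x hx => aux_const isOpen_Ioo (convex_Ioo _ _)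
          (fun z hz => hgdiff z (hJpsub hz))
          (fun z hz => hode z (hJpsub hz).1) hx hrmJp
      intro x hx
      rw [hconst x hx, hgdef]
      simp [hμm]
    -- deriv v vanishes on Jp
    have hIoosub : Ioo rm rp ⊆ Jp :=
      fun x hx => ⟨max_lt (by linarith [hx.1]) (lt_trans hrm hx.1), by linarith [hx.2]⟩
    have hoff : ∀ x ∈ Jp, x ≠ rm → x ≠ rp → deriv v x = 0 := by
      intro x hx h1 h2
      have hg0 := hgJp0 x hx
      rw [hgdef] at hg0
      have hne : ((μ x * x ^ 2 : ℝ) : ℂ) ≠ 0 := by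
        rw [Complex.ofReal_ne_zero]
        exact mul_ne_zero (hμne' x (hJpsub hx).1 h1 h2) (pow_ne_zero _ (hJpsub hx).2)
      exact (mul_eq_zero.mp hg0).resolve_left hne
    have hdv0 : ∀ x ∈ Jp, deriv v x = 0 := by
      have key : ∀ y ∈ Jp, y ∈ closure (Ioo rm rp) → deriv v y = 0 := by
        intro y hy hyc
        have hne : (𝓝[Ioo rm rp] y).NeBot := mem_closure_iff_nhdsWithin_neBot.mp hyc
        have h1 : Tendsto (deriv v) (𝓝[Ioo rm rp] y) (𝓝 (deriv v y)) :=
          (hdvs.continuousOn y (hJpsub hy)).mono (fun x hx => hJpsub (hIoosub hx))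
        have h2 : Tendsto (deriv v) (𝓝[Ioo rm rp] y) (𝓝 0) := by
          apply Tendsto.congr' _ tendsto_const_nhds
          filter_upwards [self_mem_nhdsWithin] with x hx
          exact (hoff x (hIoosub hx) (ne_of_gt hx.1) (ne_of_lt hx.2)).symm
        exact tendsto_nhds_unique h1 h2
      intro x hx
      by_cases h1 : x = rm
      · subst h1
        exact key x hx (by rw [closure_Ioo hrmp.ne]; exact ⟨le_refl _, hrmp.le⟩)
      by_cases h2 : x = rp
      · subst h2
        exact key x hx (by rw [closure_Ioo hrmp.ne]; exact ⟨hrmp.le, le_refl _⟩)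
      exact hoff x hx h1 h2
    have hvconst : ∀ x ∈ Jp, v x = v rm :=
      fun x hx => aux_const (isOpen_Ioo) (convex_Ioo _ _)
        (fun z hz => (hvs.contDiffAt (hso.mem_nhds (hJpsub hz))).differentiableAt (by simp))
        hdv0 hx hrmJp
    set a : ℂ := v rm with hadef
    have hpos : ∀ r ∈ Jp, u r = a * (r : ℂ) := by
      intro r hr
      have hr0 : (r : ℂ) ≠ 0 := Complex.ofReal_ne_zero.mpr (hJpsub hr).2
      have h : u r / (r : ℂ) = a := hvconst r hr
      rwa [div_eq_iff hr0] at h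
    by_cases hcase : 0 ≤ rm - η₀
    · refine ⟨a, fun r hr => hpos r ⟨max_lt hr.1 (lt_of_le_of_lt hcase hr.1), hr.2⟩⟩
    · push_neg at hcase
      have hmax : max (rm - η₀) 0 = 0 := max_eq_right hcase.le
      have h0J : (0:ℝ) ∈ Ioo (rm - η₀) (rp + η₀) := ⟨hcase, by linarith⟩
      set G : ℝ → ℂ := fun t => ((μ t : ℝ) : ℂ) * ((t : ℂ) * deriv u t - u t) with hGdef
      have hGcont : ContinuousOn G (Ioo (rm - η₀) (rp + η₀)) :=
        (Complex.continuous_ofReal.comp_continuousOn hμ.continuousOn).mul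
          (((Complex.continuous_ofReal.continuousOn).mul
            (hu.continuousOn_deriv_of_isOpen hJo (by simp))).sub hu.continuousOn)
      have hGg : ∀ t ∈ s, g t = G t := by
        intro t ht
        have ht0 : (t : ℂ) ≠ 0 := Complex.ofReal_ne_zero.mpr ht.2
        have hd : HasDerivAt (fun x : ℝ => u x / (x : ℂ))
            ((deriv u t * (t : ℂ) - u t * 1) / (t : ℂ) ^ 2) t :=
          ((hudiff t ht.1).hasDerivAt).div (aux_ofReal_hasDerivAt t) ht0
        simp only [hgdef, hGdef, hvdef]
        rw [hd.deriv]
        push_cast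
        field_simp
      have hsubJ : Ioo (0:ℝ) (rp + η₀) ⊆ Ioo (rm - η₀) (rp + η₀) :=
        fun x hx => ⟨by linarith [hx.1], hx.2⟩
      have hnb0 : (𝓝[Ioo (0:ℝ) (rp + η₀)] 0).NeBot := by
        rw [← mem_closure_iff_nhdsWithin_neBot,
          closure_Ioo (by linarith : (0:ℝ) ≠ rp + η₀)]
        exact ⟨le_refl _, by linarith⟩
      have hG0 : G 0 = 0 := by
        have h1 : Tendsto G (𝓝[Ioo (0:ℝ) (rp + η₀)] 0) (𝓝 (G 0)) :=
          (hGcont 0 h0J).mono hsubJ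
        have h2 : Tendsto G (𝓝[Ioo (0:ℝ) (rp + η₀)] 0) (𝓝 0) := by
          apply Tendsto.congr' _ tendsto_const_nhds
          filter_upwards [self_mem_nhdsWithin] with x hx
          have hxJp : x ∈ Jp := ⟨by rw [hmax]; exact hx.1, hx.2⟩
          rw [← hGg x (hJpsub hxJp)]
          exact (hgJp0 x hxJp).symm
        exact tendsto_nhds_unique h1 h2
      have hu0 : u 0 = 0 := by
        have hμ0 : μ 0 ≠ 0 := by
          refine hμne 0 ⟨h0J, fun hmem => ?_⟩
          have := hmem.1; linarith
        have h := hG0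
        simp only [hGdef, Complex.ofReal_zero, zero_mul, zero_sub, mul_neg, neg_eq_zero,
          mul_eq_zero, Complex.ofReal_eq_zero] at h
        exact h.resolve_left hμ0
      -- negative side
      have hJmsub : Ioo (rm - η₀) (0:ℝ) ⊆ s :=
        fun x hx => ⟨⟨hx.1, by linarith [hx.2]⟩, ne_of_lt hx.2⟩
      set x₀ : ℝ := (rm - η₀)/2 with hx₀def
      have hx₀m : x₀ ∈ Ioo (rm - η₀) (0:ℝ) := ⟨by simp only [hx₀def]; linarith, by simp only [hx₀def]; linarith⟩
      have hgconstm : ∀ x ∈ Ioo (rm - η₀) (0:ℝ), g x = g x₀ :=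
        fun x hx => aux_const isOpen_Ioo (convex_Ioo _ _)
          (fun z hz => hgdiff z (hJmsub hz)) (fun z hz => hode z (hJmsub hz).1) hx hx₀m
      have hnbm : (𝓝[Ioo (rm - η₀) (0:ℝ)] 0).NeBot := by
        rw [← mem_closure_iff_nhdsWithin_neBot, closure_Ioo (ne_of_lt hcase)]
        exact ⟨hcase.le, le_refl _⟩
      have hgx₀ : g x₀ = 0 := by
        have h1 : Tendsto G (𝓝[Ioo (rm - η₀) (0:ℝ)] 0) (𝓝 (G 0)) :=
          (hGcont 0 h0J).mono (fun x hx => ⟨hx.1, by linarith [hx.2]⟩)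
        have h2 : Tendsto G (𝓝[Ioo (rm - η₀) (0:ℝ)] 0) (𝓝 (g x₀)) := by
          apply Tendsto.congr' _ tendsto_const_nhds
          filter_upwards [self_mem_nhdsWithin] with x hx
          rw [← hGg x (hJmsub hx)]
          exact (hgconstm x hx).symm
        rw [← hG0]
        exact tendsto_nhds_unique h2 h1
      have hdvm : ∀ x ∈ Ioo (rm - η₀) (0:ℝ), deriv v x = 0 := by
        intro x hx
        have hg0 := (hgconstm x hx).trans hgx₀
        rw [hgdef] at hg0
        have hne : ((μ x * x ^ 2 : ℝ) : ℂ) ≠ 0 := by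
          rw [Complex.ofReal_ne_zero]
          refine mul_ne_zero (hμne x ⟨(hJmsub hx).1, fun hmem => ?_⟩)
            (pow_ne_zero _ (ne_of_lt hx.2))
          have := hmem.1; linarith [hx.2]
        exact (mul_eq_zero.mp hg0).resolve_left hne
      have hvconstm : ∀ x ∈ Ioo (rm - η₀) (0:ℝ), v x = v x₀ :=
        fun x hx => aux_const isOpen_Ioo (convex_Ioo _ _)
          (fun z hz => (hvs.contDiffAt (hso.mem_nhds (hJmsub hz))).differentiableAt (by simp))
          hdvm hx hx₀m
      set b : ℂ := v x₀ with hbdef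
      have hnegu : ∀ r ∈ Ioo (rm - η₀) (0:ℝ), u r = b * (r : ℂ) := by
        intro r hr
        have hr0 : (r : ℂ) ≠ 0 := Complex.ofReal_ne_zero.mpr (ne_of_lt hr.2)
        have h : u r / (r : ℂ) = b := hvconstm r hr
        rwa [div_eq_iff hr0] at h
      -- a = b = deriv u 0
      have hA : a = deriv u 0 := by
        have hlin : HasDerivAt (fun x : ℝ => a * (x : ℂ)) a 0 := by
          simpa using (aux_ofReal_hasDerivAt 0).const_mul a
        have hderA : HasDerivWithinAt u a (Ici (0:ℝ)) 0 := by
          apply hlin.hasDerivWithinAt.congr_of_eventuallyEq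
          · filter_upwards [self_mem_nhdsWithin,
              mem_nhdsWithin_of_mem_nhds (Iio_mem_nhds (by linarith : (0:ℝ) < rp + η₀))]
              with x hx1 hx2
            rcases eq_or_lt_of_le (show (0:ℝ) ≤ x from hx1) with h | h
            · rw [← h]; simp [hu0]
            · exact hpos x ⟨by rw [hmax]; exact h, hx2⟩
          · simp [hu0]
        have hderA' : HasDerivWithinAt u (deriv u 0) (Ici (0:ℝ)) 0 :=
          (hudiff 0 h0J).hasDerivAt.hasDerivWithinAt
        rw [← hderA.derivWithin (uniqueDiffOn_Ici 0 0 self_mem_Ici),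
          ← hderA'.derivWithin (uniqueDiffOn_Ici 0 0 self_mem_Ici)]
      have hB : b = deriv u 0 := by
        have hlin : HasDerivAt (fun x : ℝ => b * (x : ℂ)) b 0 := by
          simpa using (aux_ofReal_hasDerivAt 0).const_mul b
        have hderB : HasDerivWithinAt u b (Iic (0:ℝ)) 0 := by
          apply hlin.hasDerivWithinAt.congr_of_eventuallyEq
          · filter_upwards [self_mem_nhdsWithin,
              mem_nhdsWithin_of_mem_nhds (Ioi_mem_nhds hcase)]
              with x hx1 hx2
            rcases eq_or_lt_of_le (show x ≤ 0 from hx1) with h | h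
            · rw [h]; simp [hu0]
            · exact hnegu x ⟨hx2, h⟩
          · simp [hu0]
        have hderB' : HasDerivWithinAt u (deriv u 0) (Iic (0:ℝ)) 0 :=
          (hudiff 0 h0J).hasDerivAt.hasDerivWithinAt
        rw [← hderB.derivWithin (uniqueDiffOn_Iic 0 0 self_mem_Iic),
          ← hderB'.derivWithin (uniqueDiffOn_Iic 0 0 self_mem_Iic)]
      refine ⟨a, fun r hr => ?_⟩
      rcases lt_trichotomy r 0 with h | h | h
      · rw [hnegu r ⟨hr.1, h⟩, hB, ← hA]
      · rw [h]; simp [hu0]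
      · exact hpos r ⟨by rw [hmax]; exact h, hr.2⟩
  · intro a r hr
    have : (fun t : ℝ =>
        ((μ t * t ^ 2 : ℝ) : ℂ) * deriv (fun x : ℝ => (a * (x : ℂ)) / (x : ℂ)) t)
        = fun _ => 0 := by
      funext t
      rw [aux_part2 a t, mul_zero]
    rw [this]
    simp
end

section
/- For every σ ∈ ℂ and s ∈ ℝ one has ∫_{r_-}^{r_+} t · g(t) dt = −c²[ σ²(r_+³ − r_-³)/3 + sσ(r_+² − r_-²) + s²(r_+ − r_-) ] − iσ(r_+² + r_-²) − is(r_+ + r_-), where g(t) = −c²(σ + s/t)² t + (i/t)(d/dt)( t² ν(t)(σ + s/t) ) is the radial charged Klein–Gordon operator at mass m = 0 applied to the function u(r) = r. (This computes the matrix entry ⟨r*, P̂(σ, s, 0) r⟩.) -/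
/-- for all `σ ∈ ℂ`, `s ∈ ℝ`,
`∫_{r₋}^{r₊} t·g(t) dt = −c²[σ²(r₊³−r₋³)/3 + sσ(r₊²−r₋²) + s²(r₊−r₋)] − iσ(r₊²+r₋²) − is(r₊+r₋)`,
where `g(t) = −c²(σ + s/t)²t + (i/t)(d/dt)(t²ν(t)(σ + s/t))` is the radial charged
Klein–Gordon operator at `m = 0` applied to `u(r) = r` (the entry `⟨r*, P̂(σ,s,0) r⟩`). -/
theorem stmt4 (rm rp η₀ c : ℝ) (hrm : 0 < rm) (hrmp : rm < rp) (hη : 0 < η₀)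
    (J : Set ℝ) (hJ : J = Set.Ioo (rm - η₀) (rp + η₀))
    (μ ν : ℝ → ℝ) (hμ : ContDiffOn ℝ (⊤ : ℕ∞) μ J)
    (hμm : μ rm = 0) (hμp : μ rp = 0)
    (hμm' : deriv μ rm ≠ 0) (hμp' : deriv μ rp ≠ 0)
    (hμpos : ∀ r ∈ Set.Ioo rm rp, 0 < μ r)
    (hμne : ∀ r ∈ J \ Set.Icc rm rp, μ r ≠ 0)
    (hc : 0 < c) (hμc : ∀ r ∈ J, 0 ≤ 1 - μ r * c ^ 2)
    (hν : ContDiffOn ℝ (⊤ : ℕ∞) ν J)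
    (hν2 : ∀ r ∈ J, ν r ^ 2 = 1 - μ r * c ^ 2) (hνm : ν rm = 1) (hνp : ν rp = -1)
    (σ : ℂ) (s : ℝ)
    (g : ℝ → ℂ)
    (hg : ∀ t : ℝ, g t =
      -(c : ℂ) ^ 2 * (σ + ((s / t : ℝ) : ℂ)) ^ 2 * (t : ℂ) +
        Complex.I / (t : ℂ) *
          deriv (fun x : ℝ => ((x ^ 2 * ν x : ℝ) : ℂ) * (σ + ((s / x : ℝ) : ℂ))) t) :
    (∫ t in rm..rp, (t : ℂ) * g t) =
      -(c : ℂ) ^ 2 * (σ ^ 2 * ((rp ^ 3 - rm ^ 3 : ℝ) : ℂ) / 3 +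
          (s : ℂ) * σ * ((rp ^ 2 - rm ^ 2 : ℝ) : ℂ) + (s : ℂ) ^ 2 * ((rp - rm : ℝ) : ℂ)) -
        Complex.I * σ * ((rp ^ 2 + rm ^ 2 : ℝ) : ℂ) -
        Complex.I * (s : ℂ) * ((rp + rm : ℝ) : ℂ) := by
  have hJopen : IsOpen J := hJ ▸ isOpen_Ioo
  have huIcc : Set.uIcc rm rp = Set.Icc rm rp := Set.uIcc_of_le hrmp.le
  have hsub : Set.Icc rm rp ⊆ J := by
    rw [hJ]
    intro t ht
    exact ⟨by linarith [ht.1], by linarith [ht.2]⟩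
  -- differentiability of ν on J
  have hνdiff : DifferentiableOn ℝ ν J := hν.differentiableOn (by norm_num)
  have hνd : ∀ t ∈ J, HasDerivAt ν (deriv ν t) t := fun t ht =>
    ((hνdiff t ht).differentiableAt (hJopen.mem_nhds ht)).hasDerivAt
  -- the auxiliary function h and its derivative
  set h : ℝ → ℂ := fun x => ((ν x : ℝ) : ℂ) * (σ * (x : ℂ) ^ 2 + (s : ℂ) * (x : ℂ)) with hh
  set h' : ℝ → ℂ := fun x =>
    ((deriv ν x : ℝ) : ℂ) * (σ * (x : ℂ) ^ 2 + (s : ℂ) * (x : ℂ)) +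
      ((ν x : ℝ) : ℂ) * (2 * σ * (x : ℂ) + (s : ℂ)) with hh'
  have hx : ∀ t : ℝ, HasDerivAt (fun x : ℝ => (x : ℂ)) 1 t := by
    intro t
    simpa using (hasDerivAt_id t).ofReal_comp
  have hx2 : ∀ t : ℝ, HasDerivAt (fun x : ℝ => (x : ℂ) ^ 2) (2 * (t : ℂ)) t := by
    intro t
    have := (hasDerivAt_pow 2 t).ofReal_comp
    simpa using this
  have hx3 : ∀ t : ℝ, HasDerivAt (fun x : ℝ => (x : ℂ) ^ 3) (3 * (t : ℂ) ^ 2) t := by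
    intro t
    have := (hasDerivAt_pow 3 t).ofReal_comp
    simpa using this
  have hpoly : ∀ t : ℝ, HasDerivAt (fun x : ℝ => σ * (x : ℂ) ^ 2 + (s : ℂ) * (x : ℂ))
      (2 * σ * (t : ℂ) + (s : ℂ)) t := by
    intro t
    have h1 : HasDerivAt (fun x : ℝ => σ * (x : ℂ) ^ 2) (σ * (2 * (t : ℂ))) t :=
      (hx2 t).const_mul σ
    have h2 : HasDerivAt (fun x : ℝ => (s : ℂ) * (x : ℂ)) ((s : ℂ) * 1) t :=
      (hx t).const_mul (s : ℂ)
    have := h1.add h2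
    refine this.congr_deriv ?_
    ring
  have hhderiv : ∀ t ∈ J, HasDerivAt h (h' t) t := by
    intro t ht
    have h1 : HasDerivAt (fun x : ℝ => ((ν x : ℝ) : ℂ)) ((deriv ν t : ℝ) : ℂ) t :=
      (hνd t ht).ofReal_comp
    exact h1.mul (hpoly t)
  -- g in terms of h'
  have hfd : ∀ t ∈ Set.Icc rm rp,
      deriv (fun x : ℝ => ((x ^ 2 * ν x : ℝ) : ℂ) * (σ + ((s / x : ℝ) : ℂ))) t = h' t := by
    intro t ht
    have htpos : 0 < t := lt_of_lt_of_le hrm ht.1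
    have heq : (fun x : ℝ => ((x ^ 2 * ν x : ℝ) : ℂ) * (σ + ((s / x : ℝ) : ℂ))) =ᶠ[nhds t] h := by
      filter_upwards [eventually_gt_nhds htpos] with x hx0
      have hx0' : (x : ℂ) ≠ 0 := by exact_mod_cast ne_of_gt hx0
      show ((x ^ 2 * ν x : ℝ) : ℂ) * (σ + ((s / x : ℝ) : ℂ)) =
        ((ν x : ℝ) : ℂ) * (σ * (x : ℂ) ^ 2 + (s : ℂ) * (x : ℂ))
      push_cast
      field_simp
    rw [heq.deriv_eq]
    exact (hhderiv t (hsub ht)).deriv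
  -- the integrand equals G on [rm, rp]
  set G : ℝ → ℂ := fun t =>
    -(c : ℂ) ^ 2 * (σ ^ 2 * (t : ℂ) ^ 2 + 2 * σ * (s : ℂ) * (t : ℂ) + (s : ℂ) ^ 2) +
      Complex.I * h' t with hG
  have hint_eq : ∀ t ∈ Set.Icc rm rp, (t : ℂ) * g t = G t := by
    intro t ht
    have htpos : 0 < t := lt_of_lt_of_le hrm ht.1
    have htne : (t : ℂ) ≠ 0 := by exact_mod_cast ne_of_gt htpos
    rw [hg t, hfd t ht, hG]
    have hsd : ((s / t : ℝ) : ℂ) = (s : ℂ) / (t : ℂ) := by push_cast; ring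
    rw [hsd]
    field_simp
    ring
  -- F and its derivative
  set F : ℝ → ℂ := fun t =>
    -(c : ℂ) ^ 2 * (σ ^ 2 * (t : ℂ) ^ 3 / 3 + σ * (s : ℂ) * (t : ℂ) ^ 2 + (s : ℂ) ^ 2 * (t : ℂ)) +
      Complex.I * h t with hF
  have hFd : ∀ t ∈ Set.uIcc rm rp, HasDerivAt F (G t) t := by
    intro t ht
    rw [huIcc] at ht
    have htJ : t ∈ J := hsub ht
    have h1 : HasDerivAt (fun x : ℝ =>
        σ ^ 2 * (x : ℂ) ^ 3 / 3 + σ * (s : ℂ) * (x : ℂ) ^ 2 + (s : ℂ) ^ 2 * (x : ℂ))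
        (σ ^ 2 * (t : ℂ) ^ 2 + 2 * σ * (s : ℂ) * (t : ℂ) + (s : ℂ) ^ 2) t := by
      have hc3 : HasDerivAt (fun x : ℝ => σ ^ 2 * (x : ℂ) ^ 3 / 3)
          (σ ^ 2 * (3 * (t : ℂ) ^ 2) / 3) t := ((hx3 t).const_mul (σ ^ 2)).div_const 3
      have hc2 : HasDerivAt (fun x : ℝ => σ * (s : ℂ) * (x : ℂ) ^ 2)
          (σ * (s : ℂ) * (2 * (t : ℂ))) t := (hx2 t).const_mul (σ * (s : ℂ))
      have hc1 : HasDerivAt (fun x : ℝ => (s : ℂ) ^ 2 * (x : ℂ)) ((s : ℂ) ^ 2 * 1) t :=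
        (hx t).const_mul ((s : ℂ) ^ 2)
      have := (hc3.add hc2).add hc1
      refine this.congr_deriv ?_
      ring
    have h2 := (h1.const_mul (-(c : ℂ) ^ 2)).add ((hhderiv t htJ).const_mul Complex.I)
    exact h2
  have hνcont : ContinuousOn ν J := hν.continuousOn
  have hνdcont : ContinuousOn (deriv ν) J :=
    hν.continuousOn_deriv_of_isOpen hJopen (by simp)
  have hGcont : ContinuousOn G (Set.uIcc rm rp) := by
    rw [huIcc]
    apply ContinuousOn.add
    · exact (continuousOn_const.mul (by fun_prop))
    · apply continuousOn_const.mul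
      apply ContinuousOn.add
      · exact ((Complex.continuous_ofReal.comp_continuousOn
          (hνdcont.mono hsub)).mul (by fun_prop))
      · exact ((Complex.continuous_ofReal.comp_continuousOn
          (hνcont.mono hsub)).mul (by fun_prop))
  have hcongr : (∫ t in rm..rp, (t : ℂ) * g t) = ∫ t in rm..rp, G t := by
    apply intervalIntegral.integral_congr
    intro t ht
    exact hint_eq t (huIcc ▸ ht)
  rw [hcongr, intervalIntegral.integral_eq_sub_of_hasDerivAt hFd
    (hGcont.intervalIntegrable)]
  rw [hF]
  simp only [hh, hνp, hνm]
  push_cast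
  ring
end

section
/- Let a₁, b₁, b₂ ∈ ℝ and a₂ > 0, and for s ∈ ℝ set A(s) = s a₁ + i a₂ and B(s) = s² b₁ + i s b₂. Then there exist s₀ > 0 and a function σ₊ : (−s₀, s₀) → ℂ such that σ₊(s)² + A(s)σ₊(s) + B(s) = 0 for all |s| < s₀ and, as s → 0, σ₊(s) = −s·(b₂/a₂) + i s²·(b₁a₂² + b₂² − b₂a₁a₂)/a₂³ + O(|s|³). In particular Im σ₊(s) = s²·(b₁a₂² + b₂² − b₂a₁a₂)/a₂³ + O(|s|³). -/
noncomputable def stmt6A (a₁ a₂ s : ℝ) : ℂ := ((s * a₁ : ℝ) : ℂ) + Complex.I * (a₂ : ℂ)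

noncomputable def stmt6B (b₁ b₂ s : ℝ) : ℂ :=
  ((s ^ 2 * b₁ : ℝ) : ℂ) + Complex.I * ((s * b₂ : ℝ) : ℂ)

noncomputable def stmt6w (a₁ a₂ b₁ b₂ s : ℝ) : ℂ :=
  (4 * stmt6B b₁ b₂ s - stmt6A a₁ a₂ s ^ 2) ^ ((2 : ℂ)⁻¹)

lemma stmt6w_sq (a₁ a₂ b₁ b₂ s : ℝ) :
    stmt6w a₁ a₂ b₁ b₂ s ^ 2 = 4 * stmt6B b₁ b₂ s - stmt6A a₁ a₂ s ^ 2 := by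
  simpa [stmt6w] using
    Complex.cpow_ofNat_inv_pow (4 * stmt6B b₁ b₂ s - stmt6A a₁ a₂ s ^ 2) 2

noncomputable def stmt6r1 (a₁ a₂ b₁ b₂ s : ℝ) : ℂ :=
  (-stmt6A a₁ a₂ s + Complex.I * stmt6w a₁ a₂ b₁ b₂ s) / 2

noncomputable def stmt6r2 (a₁ a₂ b₁ b₂ s : ℝ) : ℂ :=
  (-stmt6A a₁ a₂ s - Complex.I * stmt6w a₁ a₂ b₁ b₂ s) / 2

noncomputable def stmt6tau (p c s : ℝ) : ℂ :=
  ((-(s * p) : ℝ) : ℂ) + Complex.I * ((s ^ 2 * c : ℝ) : ℂ)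

noncomputable def stmt6sig (a₁ a₂ b₁ b₂ p c s : ℝ) : ℂ :=
  if ‖stmt6tau p c s - stmt6r1 a₁ a₂ b₁ b₂ s‖ ≤
      ‖stmt6tau p c s - stmt6r2 a₁ a₂ b₁ b₂ s‖
  then stmt6r1 a₁ a₂ b₁ b₂ s else stmt6r2 a₁ a₂ b₁ b₂ s

lemma stmt6_root1 (a₁ a₂ b₁ b₂ s : ℝ) :
    stmt6r1 a₁ a₂ b₁ b₂ s ^ 2 + stmt6A a₁ a₂ s * stmt6r1 a₁ a₂ b₁ b₂ s + stmt6B b₁ b₂ s = 0 := by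
  have hw := stmt6w_sq a₁ a₂ b₁ b₂ s
  simp only [stmt6r1]
  linear_combination (stmt6w a₁ a₂ b₁ b₂ s ^ 2 / 4) * Complex.I_sq - hw / 4

lemma stmt6_root2 (a₁ a₂ b₁ b₂ s : ℝ) :
    stmt6r2 a₁ a₂ b₁ b₂ s ^ 2 + stmt6A a₁ a₂ s * stmt6r2 a₁ a₂ b₁ b₂ s + stmt6B b₁ b₂ s = 0 := by
  have hw := stmt6w_sq a₁ a₂ b₁ b₂ s
  simp only [stmt6r2]
  linear_combination (stmt6w a₁ a₂ b₁ b₂ s ^ 2 / 4) * Complex.I_sq - hw / 4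

lemma stmt6_fact (a₁ a₂ b₁ b₂ p c s : ℝ) :
    (stmt6tau p c s - stmt6r1 a₁ a₂ b₁ b₂ s) * (stmt6tau p c s - stmt6r2 a₁ a₂ b₁ b₂ s) =
      stmt6tau p c s ^ 2 + stmt6A a₁ a₂ s * stmt6tau p c s + stmt6B b₁ b₂ s := by
  have hw := stmt6w_sq a₁ a₂ b₁ b₂ s
  simp only [stmt6r1, stmt6r2]
  linear_combination (-(stmt6w a₁ a₂ b₁ b₂ s ^ 2) / 4) * Complex.I_sq + hw / 4

lemma stmt6_sum (a₁ a₂ b₁ b₂ s : ℝ) :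
    stmt6r1 a₁ a₂ b₁ b₂ s + stmt6r2 a₁ a₂ b₁ b₂ s = -stmt6A a₁ a₂ s := by
  simp only [stmt6r1, stmt6r2]; ring

lemma stmt6_q (a₁ a₂ b₁ b₂ p c s : ℝ) (hb2 : b₂ = p * a₂)
    (hb1 : b₁ = a₂ * c + a₁ * p - p ^ 2) :
    stmt6tau p c s ^ 2 + stmt6A a₁ a₂ s * stmt6tau p c s + stmt6B b₁ b₂ s =
      (s : ℂ) ^ 3 * (Complex.I * c * (a₁ - 2 * p) - s * (c : ℂ) ^ 2) := by
  subst hb2 hb1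
  simp only [stmt6tau, stmt6A, stmt6B]
  push_cast
  linear_combination ((s : ℂ) ^ 4 * c ^ 2 + (s : ℂ) ^ 2 * a₂ * c) * Complex.I_sq

lemma stmt6_pick (a₂ : ℝ) (ha₂ : 0 < a₂) (τ x y : ℂ) (M : ℝ)
    (hxy : ‖τ - x‖ ≤ ‖τ - y‖)
    (hprod : ‖τ - x‖ * ‖τ - y‖ ≤ M)
    (hM : M ≤ a₂ ^ 2 / 16)
    (hsum : a₂ / 2 ≤ ‖2 * τ - x - y‖) :
    ‖τ - x‖ ≤ 4 * M / a₂ := by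
  set d1 := ‖τ - x‖ with hd1def
  set d2 := ‖τ - y‖ with hd2def
  have h1 : 0 ≤ d1 := norm_nonneg _
  have h2 : 0 ≤ d2 := norm_nonneg _
  have hsq : d1 ^ 2 ≤ M := by nlinarith
  have hd1 : d1 ≤ a₂ / 4 := by nlinarith
  have htri : ‖2 * τ - x - y‖ ≤ d1 + d2 := by
    have h : 2 * τ - x - y = (τ - x) + (τ - y) := by ring
    rw [h]
    exact norm_add_le _ _
  have hd2 : a₂ / 4 ≤ d2 := by linarith
  have : d1 * (a₂ / 4) ≤ M := le_trans (by nlinarith) hprod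
  rw [le_div_iff₀ ha₂]
  nlinarith

set_option maxHeartbeats 1600000 in
/-- with `A(s) = sa₁ + ia₂`, `B(s) = s²b₁ + isb₂` (`a₂ > 0`), there is a
branch `σ₊(s)` of roots of `σ² + A(s)σ + B(s) = 0` for small `s` satisfying
`σ₊(s) = −s b₂/a₂ + is²(b₁a₂² + b₂² − b₂a₁a₂)/a₂³ + O(|s|³)`, and in particular
`Im σ₊(s) = s²(b₁a₂² + b₂² − b₂a₁a₂)/a₂³ + O(|s|³)`. -/
theorem stmt6 (a₁ b₁ b₂ a₂ : ℝ) (ha₂ : 0 < a₂) :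
    ∃ s₀ > 0, ∃ σp : ℝ → ℂ, ∃ C > 0,
      (∀ s : ℝ, |s| < s₀ →
        σp s ^ 2 + (((s * a₁ : ℝ) : ℂ) + Complex.I * (a₂ : ℂ)) * σp s +
          (((s ^ 2 * b₁ : ℝ) : ℂ) + Complex.I * ((s * b₂ : ℝ) : ℂ)) = 0) ∧
      (∀ s : ℝ, |s| < s₀ →
        ‖σp s -
          ((-(s * (b₂ / a₂)) : ℝ) +
            Complex.I * ((s ^ 2 * ((b₁ * a₂ ^ 2 + b₂ ^ 2 - b₂ * a₁ * a₂) / a₂ ^ 3) : ℝ)))‖ ≤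
          C * |s| ^ 3) ∧
      (∀ s : ℝ, |s| < s₀ →
        |(σp s).im - s ^ 2 * ((b₁ * a₂ ^ 2 + b₂ ^ 2 - b₂ * a₁ * a₂) / a₂ ^ 3)| ≤ C * |s| ^ 3) := by
  classical
  have ha : a₂ ≠ 0 := ne_of_gt ha₂
  set p : ℝ := b₂ / a₂ with hp
  set c : ℝ := (b₁ * a₂ ^ 2 + b₂ ^ 2 - b₂ * a₁ * a₂) / a₂ ^ 3 with hc
  have hb2 : b₂ = p * a₂ := by rw [hp]; field_simp
  have hb1 : b₁ = a₂ * c + a₁ * p - p ^ 2 := by rw [hp, hc]; field_simp; ring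
  set K : ℝ := |c| * |a₁ - 2 * p| + c ^ 2 + 1 with hK
  have hKpos : 0 < K := by positivity
  set s₀ : ℝ := min 1 (min (a₂ ^ 2 / (16 * K)) (a₂ / (4 * (|c| + 1)))) with hs0
  have hs₀pos : 0 < s₀ := by
    apply lt_min (by norm_num)
    exact lt_min (by positivity) (by positivity)
  have hCpos : (0:ℝ) < 4 * K / a₂ := by positivity
  have hs01 : s₀ ≤ 1 := by rw [hs0]; exact min_le_left _ _
  have hs0K : s₀ ≤ a₂ ^ 2 / (16 * K) := by
    rw [hs0]; exact le_trans (min_le_right _ _) (min_le_left _ _)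
  have hs0c : s₀ ≤ a₂ / (4 * (|c| + 1)) := by
    rw [hs0]; exact le_trans (min_le_right _ _) (min_le_right _ _)
  clear_value p c K s₀
  clear hp hc hs0
  -- the key bound
  have key : ∀ s : ℝ, |s| < s₀ →
      ‖stmt6sig a₁ a₂ b₁ b₂ p c s - stmt6tau p c s‖ ≤ 4 * K / a₂ * |s| ^ 3 := by
    intro s hs
    have hs1 : |s| ≤ 1 := le_trans hs.le hs01
    have hsK : |s| ≤ a₂ ^ 2 / (16 * K) := le_trans hs.le hs0K
    have hsc : |s| ≤ a₂ / (4 * (|c| + 1)) := le_trans hs.le hs0c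
    have hsabs : 0 ≤ |s| := abs_nonneg s
    have hcabs : 0 ≤ |c| := abs_nonneg c
    have h2 : s ^ 2 ≤ |s| := by nlinarith [sq_abs s]
    have h4 : |s| * (|c| + 1) ≤ a₂ / 4 := by
      rw [le_div_iff₀ (by positivity : (0:ℝ) < 4 * (|c| + 1))] at hsc
      nlinarith
    have hs2 : s ^ 2 * |c| ≤ a₂ / 4 := by nlinarith
    have hreal : a₂ / 2 ≤ 2 * (s ^ 2 * c) + a₂ := by
      have := neg_abs_le c
      nlinarith [sq_nonneg s]
    have hM : K * |s| ^ 3 ≤ a₂ ^ 2 / 16 := by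
      have h3 : |s| ^ 3 ≤ |s| := by simpa using pow_le_pow_of_le_one hsabs hs1 (by norm_num : 1 ≤ 3)
      have : K * |s| ≤ a₂ ^ 2 / 16 := by
        rw [le_div_iff₀ (by positivity : (0:ℝ) < 16 * K)] at hsK
        nlinarith
      nlinarith
    -- bound on |q(τ)|
    have habsq : ‖stmt6tau p c s ^ 2 + stmt6A a₁ a₂ s * stmt6tau p c s +
        stmt6B b₁ b₂ s‖ ≤ K * |s| ^ 3 := by
      rw [stmt6_q a₁ a₂ b₁ b₂ p c s hb2 hb1, norm_mul, norm_pow, Complex.norm_real, Real.norm_eq_abs]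
      rw [mul_comm (K) (|s|^3)]
      apply mul_le_mul_of_nonneg_left _ (by positivity)
      calc ‖Complex.I * c * (a₁ - 2 * p) - s * (c:ℂ) ^ 2‖
          ≤ ‖Complex.I * c * (a₁ - 2 * p)‖ + ‖(s:ℂ) * (c:ℂ) ^ 2‖ :=
            norm_sub_le _ _
        _ = |c| * |a₁ - 2 * p| + |s| * c ^ 2 := by
            rw [show Complex.I * (c:ℂ) * ((a₁:ℂ) - 2 * (p:ℂ)) = ((c * (a₁ - 2 * p) : ℝ) : ℂ) * Complex.I by push_cast; ring,
                show (s:ℂ) * (c:ℂ) ^ 2 = ((s * c ^ 2 : ℝ) : ℂ) by push_cast; ring,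
                norm_mul, Complex.norm_real, Real.norm_eq_abs, Complex.norm_real, Real.norm_eq_abs, Complex.norm_I, mul_one,
                abs_mul, abs_mul, abs_pow, sq_abs]
        _ ≤ |c| * |a₁ - 2 * p| + 1 * c ^ 2 := by nlinarith [sq_nonneg c]
        _ ≤ K := by rw [hK]; nlinarith
    have hprod : ‖stmt6tau p c s - stmt6r1 a₁ a₂ b₁ b₂ s‖ *
        ‖stmt6tau p c s - stmt6r2 a₁ a₂ b₁ b₂ s‖ ≤ K * |s| ^ 3 := by
      rw [← norm_mul, stmt6_fact]
      exact habsq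
    have hsum : a₂ / 2 ≤ ‖2 * stmt6tau p c s - stmt6r1 a₁ a₂ b₁ b₂ s -
        stmt6r2 a₁ a₂ b₁ b₂ s‖ := by
      have hrw : 2 * stmt6tau p c s - stmt6r1 a₁ a₂ b₁ b₂ s - stmt6r2 a₁ a₂ b₁ b₂ s =
          2 * stmt6tau p c s + stmt6A a₁ a₂ s := by
        have := stmt6_sum a₁ a₂ b₁ b₂ s
        linear_combination -this
      rw [hrw]
      have him : (2 * stmt6tau p c s + stmt6A a₁ a₂ s).im = 2 * (s ^ 2 * c) + a₂ := by
        simp [stmt6tau, stmt6A, ← Complex.ofReal_pow]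
      have hge : a₂ / 2 ≤ (2 * stmt6tau p c s + stmt6A a₁ a₂ s).im := by
        rw [him]; exact hreal
      calc a₂ / 2 ≤ (2 * stmt6tau p c s + stmt6A a₁ a₂ s).im := hge
        _ ≤ |(2 * stmt6tau p c s + stmt6A a₁ a₂ s).im| := le_abs_self _
        _ ≤ ‖_‖ := Complex.abs_im_le_norm _
    by_cases hcase : ‖stmt6tau p c s - stmt6r1 a₁ a₂ b₁ b₂ s‖ ≤
        ‖stmt6tau p c s - stmt6r2 a₁ a₂ b₁ b₂ s‖
    · have := stmt6_pick a₂ ha₂ (stmt6tau p c s) (stmt6r1 a₁ a₂ b₁ b₂ s)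
        (stmt6r2 a₁ a₂ b₁ b₂ s) (K * |s| ^ 3) hcase hprod hM hsum
      rw [stmt6sig, if_pos hcase, norm_sub_rev]
      calc ‖stmt6tau p c s - stmt6r1 a₁ a₂ b₁ b₂ s‖ ≤ 4 * (K * |s| ^ 3) / a₂ := this
        _ = 4 * K / a₂ * |s| ^ 3 := by ring
    · have hcase' := (not_le.mp hcase).le
      have hsum' : a₂ / 2 ≤ ‖2 * stmt6tau p c s - stmt6r2 a₁ a₂ b₁ b₂ s -
          stmt6r1 a₁ a₂ b₁ b₂ s‖ := by
        have : 2 * stmt6tau p c s - stmt6r2 a₁ a₂ b₁ b₂ s - stmt6r1 a₁ a₂ b₁ b₂ s =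
            2 * stmt6tau p c s - stmt6r1 a₁ a₂ b₁ b₂ s - stmt6r2 a₁ a₂ b₁ b₂ s := by ring
        rw [this]; exact hsum
      have hprod' := hprod
      rw [mul_comm] at hprod'
      have := stmt6_pick a₂ ha₂ (stmt6tau p c s) (stmt6r2 a₁ a₂ b₁ b₂ s)
        (stmt6r1 a₁ a₂ b₁ b₂ s) (K * |s| ^ 3) hcase' hprod' hM hsum'
      rw [stmt6sig, if_neg hcase, norm_sub_rev]
      calc ‖stmt6tau p c s - stmt6r2 a₁ a₂ b₁ b₂ s‖ ≤ 4 * (K * |s| ^ 3) / a₂ := this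
        _ = 4 * K / a₂ * |s| ^ 3 := by ring
  refine ⟨s₀, hs₀pos, stmt6sig a₁ a₂ b₁ b₂ p c, 4 * K / a₂, hCpos, ?_, ?_, ?_⟩
  · intro s _
    rw [stmt6sig]
    split
    · exact stmt6_root1 a₁ a₂ b₁ b₂ s
    · exact stmt6_root2 a₁ a₂ b₁ b₂ s
  · intro s hs
    have := key s hs
    simpa [stmt6tau] using this
  · intro s hs
    have him : (stmt6sig a₁ a₂ b₁ b₂ p c s).im - s ^ 2 * c =
        (stmt6sig a₁ a₂ b₁ b₂ p c s - stmt6tau p c s).im := by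
      simp [stmt6tau, Complex.sub_im, ← Complex.ofReal_pow]
    rw [him]
    calc |(stmt6sig a₁ a₂ b₁ b₂ p c s - stmt6tau p c s).im|
        ≤ ‖stmt6sig a₁ a₂ b₁ b₂ p c s - stmt6tau p c s‖ := Complex.abs_im_le_norm _
      _ ≤ 4 * K / a₂ * |s| ^ 3 := key s hs
end

section
/- Let f(r) = a·r − i r ∫_{r_-}^{r} (h(ϱ) − h(r_-))/(ϱ² μ(ϱ)) dϱ for some constant a ∈ ℂ, and define (Sf)(r) = (i/r)[ (σ̃ − 1/r) r² ν(r) (f/r)′ + ( h(r) · f(r)/r )′ ]. Then ∫_{r_-}^{r_+} r·(Sf)(r) dr = ∫_{r_-}^{r_+} ( h(r)² − h(r_-)² )/( r² μ(r) ) dr; in particular the left-hand side is real and independent of a. (This computes ⟨r*, S P̂(0,0,0)⁻¹ S r⟩.) -/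
open MeasureTheory intervalIntegral Set Filter

private lemma slope_div_aux (A B C d : ℝ) (hd : d ≠ 0) :
    (A / d) / (C * (B / d)) = A / (C * B) := by
  rw [← mul_div_assoc]
  rcases eq_or_ne (C * B) 0 with hcb | hcb
  · simp [hcb]
  · field_simp

/-- with `f(r) = a·r − i r ∫_{r₋}^{r}(h(ϱ) − h(r₋))/(ϱ²μ(ϱ)) dϱ` and
`(Sf)(r) = (i/r)[(σ̃ − 1/r) r²ν(r)(f/r)′ + (h·f/r)′]`, one has
`∫_{r₋}^{r₊} r·(Sf)(r) dr = ∫_{r₋}^{r₊} (h(r)² − h(r₋)²)/(r²μ(r)) dr`;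
in particular the left-hand side is real and independent of `a`
(this computes `⟨r*, S P̂(0,0,0)⁻¹ S r⟩`). -/
theorem stmt8 (rm rp η₀ c : ℝ) (hrm : 0 < rm) (hrmp : rm < rp) (hη : 0 < η₀)
    (J : Set ℝ) (hJ : J = Set.Ioo (rm - η₀) (rp + η₀))
    (μ ν : ℝ → ℝ) (hμ : ContDiffOn ℝ (⊤ : ℕ∞) μ J)
    (hμm : μ rm = 0) (hμp : μ rp = 0)
    (hμm' : deriv μ rm ≠ 0) (hμp' : deriv μ rp ≠ 0)
    (hμpos : ∀ r ∈ Set.Ioo rm rp, 0 < μ r)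
    (hμne : ∀ r ∈ J \ Set.Icc rm rp, μ r ≠ 0)
    (hc : 0 < c) (hμc : ∀ r ∈ J, 0 ≤ 1 - μ r * c ^ 2)
    (hν : ContDiffOn ℝ (⊤ : ℕ∞) ν J)
    (hν2 : ∀ r ∈ J, ν r ^ 2 = 1 - μ r * c ^ 2) (hνm : ν rm = 1) (hνp : ν rp = -1)
    (σt : ℝ) (hσt : σt = (rp + rm) / (rp ^ 2 + rm ^ 2))
    (h : ℝ → ℝ) (hh : ∀ r, h r = r ^ 2 * ν r * (σt - 1 / r))
    (a : ℂ) (f Sf : ℝ → ℂ)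
    (hf : ∀ r : ℝ, f r = a * (r : ℂ) -
        Complex.I * (r : ℂ) * (((∫ ϱ in rm..r, (h ϱ - h rm) / (ϱ ^ 2 * μ ϱ)) : ℝ) : ℂ))
    (hSf : ∀ r : ℝ, Sf r = Complex.I / (r : ℂ) *
        ((((σt - 1 / r) * (r ^ 2 * ν r) : ℝ) : ℂ) * deriv (fun t : ℝ => f t / (t : ℂ)) r +
          deriv (fun t : ℝ => ((h t : ℝ) : ℂ) * (f t / (t : ℂ))) r)) :
    (∫ r in rm..rp, (r : ℂ) * Sf r) =
      (((∫ r in rm..rp, (h r ^ 2 - h rm ^ 2) / (r ^ 2 * μ r)) : ℝ) : ℂ) := by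
  have hrp : 0 < rp := hrm.trans hrmp
  set l : ℝ := max (rm - η₀) (rm / 2) with hl
  have hlrm : l < rm := by
    apply max_lt <;> linarith
  set J' : Set ℝ := Set.Ioo l (rp + η₀) with hJ'
  have hJ'open : IsOpen J' := isOpen_Ioo
  have hJopen : IsOpen J := by rw [hJ]; exact isOpen_Ioo
  have hJ'sub : J' ⊆ J := by
    rw [hJ]
    intro x hx
    exact ⟨lt_of_le_of_lt (le_max_left _ _) hx.1, hx.2⟩
  have hposJ' : ∀ x ∈ J', 0 < x := fun x hx => by
    have : rm / 2 ≤ l := le_max_right _ _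
    have := hx.1
    linarith
  have hIcc : Set.Icc rm rp ⊆ J' := fun x hx =>
    ⟨lt_of_lt_of_le hlrm hx.1, lt_of_le_of_lt hx.2 (by linarith)⟩
  have hrmJ' : rm ∈ J' := hIcc ⟨le_refl _, le_of_lt hrmp⟩
  have hrpJ' : rp ∈ J' := hIcc ⟨le_of_lt hrmp, le_refl _⟩
  -- smoothness of h on J'
  have hhC : ContDiffOn ℝ (⊤ : ℕ∞) h J' := by
    have hhe : h = fun r => r ^ 2 * ν r * (σt - 1 / r) := funext hh
    rw [hhe]
    exact (((contDiff_id.pow 2).contDiffOn.mul (hν.mono hJ'sub)).mul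
      (contDiffOn_const.sub (contDiffOn_const.div contDiffOn_id
        (fun x hx => (hposJ' x hx).ne'))))
  have hhdiff : ∀ x ∈ J', HasDerivAt h (deriv h x) x := fun x hx =>
    ((hhC.contDiffAt (hJ'open.mem_nhds hx)).differentiableAt (by simp)).hasDerivAt
  have hh'cont : ContinuousOn (deriv h) J' := hhC.continuousOn_deriv_of_isOpen hJ'open (by simp)
  have hμdiff : ∀ x ∈ J', HasDerivAt μ (deriv μ x) x := fun x hx =>
    ((hμ.contDiffAt (hJopen.mem_nhds (hJ'sub hx))).differentiableAt (by simp)).hasDerivAt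
  -- μ nonzero off endpoints
  have hμne' : ∀ x ∈ J', x ≠ rm → x ≠ rp → μ x ≠ 0 := by
    intro x hx h1 h2
    by_cases hle : x ∈ Set.Icc rm rp
    · exact (hμpos x ⟨lt_of_le_of_ne hle.1 (Ne.symm h1), lt_of_le_of_ne hle.2 h2⟩).ne'
    · exact hμne x ⟨hJ'sub hx, hle⟩
  -- h rp = h rm
  have hhrp : h rp = h rm := by
    rw [hh, hh, hνm, hνp, hσt]
    have h3 : rp ^ 2 + rm ^ 2 ≠ 0 := by positivity
    field_simp
    ring
  -- key tendsto lemma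
  have key : ∀ x ∈ J', μ x = 0 → deriv μ x ≠ 0 → h x = h rm →
      Filter.Tendsto (fun ϱ => (h ϱ - h rm) / (ϱ ^ 2 * μ ϱ)) (nhdsWithin x {x}ᶜ)
        (nhds (deriv h x / (x ^ 2 * deriv μ x))) := by
    intro x hx hx0 hx' hxh
    have t1 : Filter.Tendsto (slope h x) (nhdsWithin x {x}ᶜ) (nhds (deriv h x)) :=
      hasDerivAt_iff_tendsto_slope.mp (hhdiff x hx)
    have t2 : Filter.Tendsto (slope μ x) (nhdsWithin x {x}ᶜ) (nhds (deriv μ x)) :=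
      hasDerivAt_iff_tendsto_slope.mp (hμdiff x hx)
    have t3 : Filter.Tendsto (fun ϱ : ℝ => ϱ ^ 2 * slope μ x ϱ) (nhdsWithin x {x}ᶜ)
        (nhds (x ^ 2 * deriv μ x)) :=
      (((continuous_pow 2).continuousAt (x := x)).tendsto.mono_left nhdsWithin_le_nhds).mul t2
    have hne : x ^ 2 * deriv μ x ≠ 0 := mul_ne_zero (pow_ne_zero 2 (hposJ' x hx).ne') hx'
    refine (t1.div t3 hne).congr' ?_
    filter_upwards [self_mem_nhdsWithin] with ϱ hϱ
    have hϱx : ϱ ≠ x := hϱ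
    have hd : ϱ - x ≠ 0 := sub_ne_zero.mpr hϱx
    show slope h x ϱ / (ϱ ^ 2 * slope μ x ϱ) = _
    rw [slope_def_field, slope_def_field, hx0, sub_zero, hxh]
    exact slope_div_aux _ _ _ _ hd
  -- the regularized integrand
  set qt : ℝ → ℝ := fun ϱ =>
    if ϱ = rm then deriv h rm / (rm ^ 2 * deriv μ rm)
    else if ϱ = rp then deriv h rp / (rp ^ 2 * deriv μ rp)
    else (h ϱ - h rm) / (ϱ ^ 2 * μ ϱ) with hqt
  have hqteq : ∀ ϱ, ϱ ≠ rm → ϱ ≠ rp → qt ϱ = (h ϱ - h rm) / (ϱ ^ 2 * μ ϱ) := by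
    intro ϱ h1 h2; simp [hqt, h1, h2]
  have hqtcont : ContinuousOn qt J' := by
    intro x hx
    apply ContinuousAt.continuousWithinAt
    by_cases h1 : x = rm
    · subst h1
      rw [← continuousWithinAt_compl_self]
      have : qt x = deriv h x / (x ^ 2 * deriv μ x) := by simp [hqt]
      unfold ContinuousWithinAt
      rw [this]
      refine (key x hx hμm hμm' rfl).congr' ?_
      filter_upwards [self_mem_nhdsWithin,
        (eventually_ne_nhds (show x ≠ rp from ne_of_lt hrmp)).filter_mono
          nhdsWithin_le_nhds] with ϱ hϱ hϱ2
      exact (hqteq ϱ hϱ hϱ2).symm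
    by_cases h2 : x = rp
    · subst h2
      rw [← continuousWithinAt_compl_self]
      have : qt x = deriv h x / (x ^ 2 * deriv μ x) := by
        simp [hqt, (ne_of_gt hrmp : x ≠ rm)]
      unfold ContinuousWithinAt
      rw [this]
      refine (key x hx hμp hμp' hhrp).congr' ?_
      filter_upwards [self_mem_nhdsWithin,
        (eventually_ne_nhds (show x ≠ rm from ne_of_gt hrmp)).filter_mono
          nhdsWithin_le_nhds] with ϱ hϱ hϱ2
      exact (hqteq ϱ hϱ2 hϱ).symm
    · have hcq : ContinuousAt (fun ϱ => (h ϱ - h rm) / (ϱ ^ 2 * μ ϱ)) x := by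
        apply ContinuousAt.div
        · exact ((hhC.continuousOn.continuousAt (hJ'open.mem_nhds hx)).sub continuousAt_const)
        · exact ((continuous_pow 2).continuousAt).mul
            ((hμ.continuousOn.continuousAt (hJopen.mem_nhds (hJ'sub hx))))
        · exact mul_ne_zero (pow_ne_zero 2 (hposJ' x hx).ne') (hμne' x hx h1 h2)
      refine hcq.congr ?_
      have hmem : {y : ℝ | y ≠ rm ∧ y ≠ rp} ∈ nhds x := by
        refine IsOpen.mem_nhds ?_ ⟨h1, h2⟩
        exact (isOpen_ne.inter isOpen_ne)
      filter_upwards [hmem] with y hy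
      exact (hqteq y hy.1 hy.2).symm
  -- interval integrability of qt
  have hqtInt : ∀ u ∈ J', ∀ v ∈ J', IntervalIntegrable qt volume u v := fun u hu v hv =>
    (hqtcont.mono (Set.ordConnected_Ioo.uIcc_subset hu hv)).intervalIntegrable
  set G : ℝ → ℝ := fun r => ∫ ϱ in rm..r, qt ϱ with hGdef
  have hG : ∀ r ∈ J', HasDerivAt G (qt r) r := fun r hr =>
    intervalIntegral.integral_hasDerivAt_right (hqtInt rm hrmJ' r hr)
      (hqtcont.stronglyMeasurableAtFilter hJ'open r hr)
      (hqtcont.continuousAt (hJ'open.mem_nhds hr))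
  have haeNe : ∀ᵐ x : ℝ, x ≠ rm ∧ x ≠ rp := by
    have : volume ({rm, rp} : Set ℝ) = 0 :=
      (Set.countable_insert.mpr (Set.countable_singleton rp)).measure_zero _
    have h2 := MeasureTheory.measure_eq_zero_iff_ae_notMem.mp this
    filter_upwards [h2] with x hx
    simp only [Set.mem_insert_iff, Set.mem_singleton_iff] at hx
    push_neg at hx
    exact hx
  have Gq : ∀ t : ℝ, (∫ ϱ in rm..t, (h ϱ - h rm) / (ϱ ^ 2 * μ ϱ)) = G t := by
    intro t
    apply intervalIntegral.integral_congr_ae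
    filter_upwards [haeNe] with x hx _
    exact (hqteq x hx.1 hx.2).symm
  have hfr : ∀ t : ℝ, t ≠ 0 → f t / (t : ℂ) = a - Complex.I * ((G t : ℝ) : ℂ) := by
    intro t ht
    rw [hf, Gq]
    have htc : (t : ℂ) ≠ 0 := Complex.ofReal_ne_zero.mpr ht
    field_simp
  -- derivative of f t / t
  have hFd : ∀ r ∈ J', HasDerivAt (fun t : ℝ => f t / (t : ℂ))
      (-(Complex.I * ((qt r : ℝ) : ℂ))) r := by
    intro r hr
    have hGd : HasDerivAt (fun t : ℝ => ((G t : ℝ) : ℂ)) ((qt r : ℝ) : ℂ) r :=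
      (hG r hr).ofReal_comp
    have h2 : HasDerivAt (fun t : ℝ => a - Complex.I * ((G t : ℝ) : ℂ))
        (-(Complex.I * ((qt r : ℝ) : ℂ))) r := by
      simpa using (hGd.const_mul Complex.I).const_sub a
    refine h2.congr_of_eventuallyEq ?_
    filter_upwards [eventually_ne_nhds (hposJ' r hr).ne'] with t ht
    exact hfr t ht
  set w : ℝ → ℂ := fun r => ((deriv h r : ℝ) : ℂ) * (f r / (r : ℂ)) +
    ((h r : ℝ) : ℂ) * (-(Complex.I * ((qt r : ℝ) : ℂ))) with hwdef
  have hHd : ∀ r ∈ J', HasDerivAt (fun t : ℝ => ((h t : ℝ) : ℂ) * (f t / (t : ℂ))) (w r) r :=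
    fun r hr => ((hhdiff r hr).ofReal_comp).mul (hFd r hr)
  -- pointwise identity
  have key2 : ∀ r ∈ Set.Icc rm rp,
      (r : ℂ) * Sf r = (((h r * qt r : ℝ)) : ℂ) + Complex.I * w r := by
    intro r hr
    have hrJ' := hIcc hr
    have hr0 : (r : ℂ) ≠ 0 := Complex.ofReal_ne_zero.mpr (hposJ' r hrJ').ne'
    rw [hSf, (hFd r hrJ').deriv, (hHd r hrJ').deriv]
    have hcc : ((σt - 1 / r) * (r ^ 2 * ν r) : ℝ) = h r := by rw [hh]; ring
    rw [hcc]
    have : (r : ℂ) * (Complex.I / (r : ℂ)) = Complex.I := by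
      field_simp
    rw [← mul_assoc, this]
    push_cast
    ring_nf
    simp [Complex.I_sq]
  -- continuity facts on Icc
  have hrmrp : rm ≤ rp := le_of_lt hrmp
  have huIcc : Set.uIcc rm rp = Set.Icc rm rp := Set.uIcc_of_le hrmrp
  have hcontIcc : ContinuousOn qt (Set.Icc rm rp) := hqtcont.mono hIcc
  have hhcont : ContinuousOn h (Set.Icc rm rp) := hhC.continuousOn.mono hIcc
  have hFcont : ContinuousOn (fun t : ℝ => f t / (t : ℂ)) (Set.Icc rm rp) := fun x hx =>
    ((hFd x (hIcc hx)).continuousAt).continuousWithinAt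
  have hwcont : ContinuousOn w (Set.Icc rm rp) := by
    have c1 : ContinuousOn (fun r : ℝ => ((qt r : ℝ) : ℂ)) (Set.Icc rm rp) :=
      Complex.continuous_ofReal.comp_continuousOn hcontIcc
    have c2 : ContinuousOn (fun r : ℝ => ((h r : ℝ) : ℂ)) (Set.Icc rm rp) :=
      Complex.continuous_ofReal.comp_continuousOn hhcont
    exact ((Complex.continuous_ofReal.comp_continuousOn (hh'cont.mono hIcc)).mul hFcont).add
      (c2.mul ((continuousOn_const.mul c1).neg))
  have hintw : IntervalIntegrable w volume rm rp := by
    apply ContinuousOn.intervalIntegrable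
    rwa [huIcc]
  have hint1 : IntervalIntegrable (fun r => h r * qt r) volume rm rp := by
    apply ContinuousOn.intervalIntegrable
    rw [huIcc]
    exact hhcont.mul hcontIcc
  have hint1c : IntervalIntegrable (fun r => (((h r * qt r : ℝ)) : ℂ)) volume rm rp := by
    apply ContinuousOn.intervalIntegrable
    rw [huIcc]
    exact Complex.continuous_ofReal.comp_continuousOn (hhcont.mul hcontIcc)
  have hint2c : IntervalIntegrable (fun r => Complex.I * w r) volume rm rp :=
    hintw.const_mul Complex.I
  -- compute the integral
  have step1 : (∫ r in rm..rp, (r : ℂ) * Sf r) =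
      ∫ r in rm..rp, ((((h r * qt r : ℝ)) : ℂ) + Complex.I * w r) := by
    apply intervalIntegral.integral_congr
    intro x hx
    exact key2 x (huIcc ▸ hx)
  have step2 : (∫ r in rm..rp, ((((h r * qt r : ℝ)) : ℂ) + Complex.I * w r)) =
      (((∫ r in rm..rp, h r * qt r : ℝ)) : ℂ) + Complex.I * ∫ r in rm..rp, w r := by
    rw [intervalIntegral.integral_add hint1c hint2c, intervalIntegral.integral_ofReal,
      intervalIntegral.integral_const_mul]
  have step3 : (∫ r in rm..rp, w r) =
      ((h rp : ℝ) : ℂ) * (f rp / (rp : ℂ)) - ((h rm : ℝ) : ℂ) * (f rm / (rm : ℂ)) := by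
    apply intervalIntegral.integral_eq_sub_of_hasDerivAt
    · intro x hx
      exact hHd x (hIcc (huIcc ▸ hx))
    · exact hintw
  have hGrm : G rm = 0 := intervalIntegral.integral_same
  have step4 : ((h rp : ℝ) : ℂ) * (f rp / (rp : ℂ)) - ((h rm : ℝ) : ℂ) * (f rm / (rm : ℂ)) =
      -(Complex.I * (((h rm * G rp : ℝ)) : ℂ)) := by
    rw [hfr rp hrp.ne', hfr rm hrm.ne', hGrm, hhrp]
    push_cast
    ring
  have step5 : Complex.I * (∫ r in rm..rp, w r) = (((h rm * G rp : ℝ)) : ℂ) := by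
    rw [step3, step4]
    have : Complex.I * -(Complex.I * (((h rm * G rp : ℝ)) : ℂ)) =
        (-(Complex.I * Complex.I)) * (((h rm * G rp : ℝ)) : ℂ) := by ring
    rw [this, Complex.I_mul_I]
    ring
  have step6 : (h rm * G rp : ℝ) = ∫ r in rm..rp, h rm * qt r := by
    rw [hGdef]
    exact (intervalIntegral.integral_const_mul _ _).symm
  have hint3 : IntervalIntegrable (fun r => h rm * qt r) volume rm rp := by
    apply ContinuousOn.intervalIntegrable
    rw [huIcc]
    exact continuousOn_const.mul hcontIcc
  have step7 : (∫ r in rm..rp, h r * qt r) + (∫ r in rm..rp, h rm * qt r) =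
      ∫ r in rm..rp, (h r * qt r + h rm * qt r) :=
    (intervalIntegral.integral_add hint1 hint3).symm
  have step8 : (∫ r in rm..rp, (h r * qt r + h rm * qt r)) =
      ∫ r in rm..rp, (h r ^ 2 - h rm ^ 2) / (r ^ 2 * μ r) := by
    apply intervalIntegral.integral_congr_ae
    filter_upwards [haeNe] with x hx hmem
    rw [Set.uIoc_of_le hrmrp] at hmem
    have hx1 : x ≠ rm := hx.1
    have hx2 : x ≠ rp := hx.2
    have hxIoo : x ∈ Set.Ioo rm rp := ⟨hmem.1, lt_of_le_of_ne hmem.2 hx2⟩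
    have hμx : μ x ≠ 0 := (hμpos x hxIoo).ne'
    have hx0 : x ≠ 0 := (hrm.trans hxIoo.1).ne'
    rw [hqteq x hx1 hx2]
    field_simp
    ring
  rw [step1, step2, step5]
  rw [← Complex.ofReal_add, step6, step7, step8]
end

section
/- For all real r one has the factorization F(r) = σ̃² (r − r_-)(r − r_+)( r + r_-(r_+ − r_-)/(r_+ + r_-) )( r − r_+(r_+ − r_-)/(r_+ + r_-) ), where F(r) = σ̃²(r⁴ − r_-⁴) − 2σ̃(r³ − r_-³) + (r² − r_-²). In particular F vanishes at r_- and at r_+. -/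
/-- factorization of `F(r) = σ̃²(r⁴ − r₋⁴) − 2σ̃(r³ − r₋³) + (r² − r₋²)`. -/
theorem stmt11 (rm rp : ℝ) (hrm : 0 < rm) (hrmp : rm < rp)
    (σt : ℝ) (hσt : σt = (rp + rm) / (rp ^ 2 + rm ^ 2))
    (F : ℝ → ℝ)
    (hF : ∀ r, F r = σt ^ 2 * (r ^ 4 - rm ^ 4) - 2 * σt * (r ^ 3 - rm ^ 3) + (r ^ 2 - rm ^ 2)) :
    (∀ r : ℝ, F r = σt ^ 2 * (r - rm) * (r - rp) * (r + rm * (rp - rm) / (rp + rm)) *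
        (r - rp * (rp - rm) / (rp + rm))) ∧ F rm = 0 ∧ F rp = 0 := by
  have hsum : rp + rm ≠ 0 := by nlinarith
  have hsq : rp ^ 2 + rm ^ 2 ≠ 0 := by nlinarith
  have hfac : ∀ r : ℝ, F r = σt ^ 2 * (r - rm) * (r - rp) *
      (r + rm * (rp - rm) / (rp + rm)) * (r - rp * (rp - rm) / (rp + rm)) := by
    intro r
    rw [hF, hσt]
    field_simp
    ring
  refine ⟨hfac, ?_, ?_⟩
  · rw [hfac rm]; ring
  · rw [hfac rp]; ring
end

section
/- Assume β r_+ > r_- (equivalently r_+² − 2 r_+ r_- − r_-² > 0). Then ∫_{r_-}^{r_+} (r + β r_-)(r − β r_+) / ( (r − r_n)(r − r_c) ) dr ≤ (1 / ( (β r_+ − r_n)(β r_+ − r_c) )) · ∫_{r_-}^{r_+} (r + β r_-)(r − β r_+) dr. -/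
/-- with `r_n < 0 < r_c < r₋ < r₊`, `β = (r₊ − r₋)/(r₊ + r₋)` and `β r₊ > r₋`,
`∫_{r₋}^{r₊} (r + β r₋)(r − β r₊)/((r − r_n)(r − r_c)) dr
   ≤ (1/((β r₊ − r_n)(β r₊ − r_c))) ∫_{r₋}^{r₊} (r + β r₋)(r − β r₊) dr`. -/
theorem stmt14 (rn rc rm rp : ℝ) (hrn : rn < 0) (hrc : 0 < rc) (hrcm : rc < rm)
    (hrmp : rm < rp) (β : ℝ) (hβ : β = (rp - rm) / (rp + rm)) (hβr : rm < β * rp) :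
    (∫ r in rm..rp, (r + β * rm) * (r - β * rp) / ((r - rn) * (r - rc))) ≤
      (1 / ((β * rp - rn) * (β * rp - rc))) * ∫ r in rm..rp, (r + β * rm) * (r - β * rp) := by
  have hab : rm ≤ rp := hrmp.le
  have hβpos : 0 < β := by
    rw [hβ]; apply div_pos <;> linarith
  have hβrp : β * rp < rp := by
    have h1 : β < 1 := by
      rw [hβ, div_lt_one (by linarith)]; linarith
    nlinarith
  have hD : 0 < (β * rp - rn) * (β * rp - rc) := by
    apply mul_pos <;> nlinarith
  have key : ∀ r ∈ Set.Icc rm rp,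
      (r + β * rm) * (r - β * rp) / ((r - rn) * (r - rc)) ≤
        (1 / ((β * rp - rn) * (β * rp - rc))) * ((r + β * rm) * (r - β * rp)) := by
    intro r hr
    obtain ⟨h1, h2⟩ := hr
    have hQ : 0 < (r - rn) * (r - rc) := by apply mul_pos <;> nlinarith
    rw [one_div, ← div_eq_inv_mul, div_le_div_iff₀ hQ hD]
    rcases le_total r (β * rp) with hc | hc
    · have hP : (r + β * rm) * (r - β * rp) ≤ 0 := by
        apply mul_nonpos_of_nonneg_of_nonpos <;> nlinarith
      have hQD : (r - rn) * (r - rc) ≤ (β * rp - rn) * (β * rp - rc) := by nlinarith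
      nlinarith
    · have hP : 0 ≤ (r + β * rm) * (r - β * rp) := by
        apply mul_nonneg <;> nlinarith
      have hQD : (β * rp - rn) * (β * rp - rc) ≤ (r - rn) * (r - rc) := by nlinarith
      nlinarith
  -- integrability
  have hcont : ContinuousOn (fun r => (r + β * rm) * (r - β * rp) / ((r - rn) * (r - rc)))
      (Set.uIcc rm rp) := by
    apply ContinuousOn.div (by fun_prop) (by fun_prop)
    intro r hr
    rw [Set.uIcc_of_le hab] at hr
    have hQ : 0 < (r - rn) * (r - rc) := by
      apply mul_pos <;> nlinarith [hr.1, hr.2]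
    exact ne_of_gt hQ
  have hint1 : IntervalIntegrable
      (fun r => (r + β * rm) * (r - β * rp) / ((r - rn) * (r - rc))) MeasureTheory.volume rm rp :=
    hcont.intervalIntegrable
  have hint2 : IntervalIntegrable
      (fun r => (1 / ((β * rp - rn) * (β * rp - rc))) * ((r + β * rm) * (r - β * rp)))
      MeasureTheory.volume rm rp := by
    apply Continuous.intervalIntegrable; fun_prop
  calc (∫ r in rm..rp, (r + β * rm) * (r - β * rp) / ((r - rn) * (r - rc)))
      ≤ ∫ r in rm..rp, (1 / ((β * rp - rn) * (β * rp - rc))) * ((r + β * rm) * (r - β * rp)) :=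
        intervalIntegral.integral_mono_on hab hint1 hint2 key
    _ = (1 / ((β * rp - rn) * (β * rp - rc))) * ∫ r in rm..rp, (r + β * rm) * (r - β * rp) :=
        intervalIntegral.integral_const_mul _ _
end

section
/- Assume r_+² − 2 r_+ r_- − r_-² > 0 and r_+⁴ + r_-⁴ − 26 r_+² r_-² > 0. Then ∫_{r_-}^{r_+} F(r) / ( r² μ(r) ) dr ≥ (r_+ − r_-)(r_+⁴ + r_-⁴ − 26 r_+² r_-²) / ( 2Λ (r_+² + r_-²)² (β r_+ − r_n)(β r_+ − r_c) ) > 0. -/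
set_option maxHeartbeats 1000000 in
/-- with `μ(r) = (Λ/(3r²))(r − r_n)(r − r_c)(r − r₋)(r₊ − r)` and
`F(r) = σ̃²(r⁴ − r₋⁴) − 2σ̃(r³ − r₋³) + (r² − r₋²)`, if `r₊² − 2r₊r₋ − r₋² > 0` and
`r₊⁴ + r₋⁴ − 26 r₊² r₋² > 0`, then
`∫_{r₋}^{r₊} F(r)/(r² μ(r)) dr ≥ (r₊ − r₋)(r₊⁴ + r₋⁴ − 26 r₊²r₋²)/(2Λ(r₊²+r₋²)²(βr₊−r_n)(βr₊−r_c)) > 0`. -/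
theorem stmt15 (rn rc rm rp Λ : ℝ) (hrn : rn < 0) (hrc : 0 < rc) (hrcm : rc < rm)
    (hrmp : rm < rp) (hΛ : 0 < Λ)
    (μ : ℝ → ℝ) (hμ : ∀ r, μ r = Λ / (3 * r ^ 2) * ((r - rn) * (r - rc) * (r - rm) * (rp - r)))
    (σt : ℝ) (hσt : σt = (rp + rm) / (rp ^ 2 + rm ^ 2))
    (β : ℝ) (hβ : β = (rp - rm) / (rp + rm))
    (F : ℝ → ℝ)
    (hF : ∀ r, F r = σt ^ 2 * (r ^ 4 - rm ^ 4) - 2 * σt * (r ^ 3 - rm ^ 3) + (r ^ 2 - rm ^ 2))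
    (h1 : 0 < rp ^ 2 - 2 * rp * rm - rm ^ 2)
    (h2 : 0 < rp ^ 4 + rm ^ 4 - 26 * rp ^ 2 * rm ^ 2) :
    (∫ r in rm..rp, F r / (r ^ 2 * μ r)) ≥
        (rp - rm) * (rp ^ 4 + rm ^ 4 - 26 * rp ^ 2 * rm ^ 2) /
          (2 * Λ * (rp ^ 2 + rm ^ 2) ^ 2 * (β * rp - rn) * (β * rp - rc)) ∧
      0 < (rp - rm) * (rp ^ 4 + rm ^ 4 - 26 * rp ^ 2 * rm ^ 2) /
          (2 * Λ * (rp ^ 2 + rm ^ 2) ^ 2 * (β * rp - rn) * (β * rp - rc)) := by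
  subst hσt
  subst hβ
  have hrm0 : 0 < rm := lt_trans hrc hrcm
  have hrp0 : 0 < rp := lt_trans hrm0 hrmp
  have hs : 0 < rp + rm := by linarith
  have hS : 0 < rp ^ 2 + rm ^ 2 := by positivity
  have hsne : rp + rm ≠ 0 := ne_of_gt hs
  have hSne : rp ^ 2 + rm ^ 2 ≠ 0 := ne_of_gt hS
  have hΛne : Λ ≠ 0 := ne_of_gt hΛ
  set σ : ℝ := (rp + rm) / (rp ^ 2 + rm ^ 2) with hσdef
  set b : ℝ := (rp - rm) / (rp + rm) * rp with hbdef
  set d : ℝ := (rp - rm) / (rp + rm) * rm with hddef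
  have hσpos : 0 < σ := by rw [hσdef]; positivity
  have hdpos : 0 < d := by
    rw [hddef]; exact mul_pos (div_pos (by linarith) hs) hrm0
  have hbrm : rm < b := by
    rw [hbdef, div_mul_eq_mul_div, lt_div_iff₀ hs]; nlinarith
  have hbrp : b < rp := by
    rw [hbdef, div_mul_eq_mul_div, div_lt_iff₀ hs]; nlinarith
  have hb0 : 0 < b := lt_trans hrm0 hbrm
  have hbrn : 0 < b - rn := by linarith
  have hbrc : 0 < b - rc := by linarith
  have hqb : 0 < (b - rn) * (b - rc) := mul_pos hbrn hbrc
  have hqbne : (b - rn) * (b - rc) ≠ 0 := ne_of_gt hqb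
  have hbrnne : b - rn ≠ 0 := ne_of_gt hbrn
  have hbrcne : b - rc ≠ 0 := ne_of_gt hbrc
  -- factorization of F
  have hFfac : ∀ x : ℝ, F x = σ ^ 2 * (b - x) * (x + d) * ((x - rm) * (rp - x)) := by
    intro x
    rw [hF, hσdef, hbdef, hddef]
    field_simp
    ring
  constructor
  · -- main inequality
    have key1 : (∫ r in rm..rp, F r / (r ^ 2 * μ r)) =
        ∫ r in rm..rp, 3 / Λ * (σ ^ 2 * (b - r) * (r + d)) / ((r - rn) * (r - rc)) := by
      apply intervalIntegral.integral_congr_ae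
      have hrpae : ∀ᵐ (x : ℝ), x ≠ rp := by
        rw [MeasureTheory.ae_iff]
        have h : {x : ℝ | ¬ x ≠ rp} = {rp} := by ext y; simp
        rw [h]
        exact MeasureTheory.measure_singleton rp
      filter_upwards [hrpae] with x hxne hmem
      rw [Set.uIoc_of_le hrmp.le] at hmem
      have hx1 : rm < x := hmem.1
      have hx2 : x < rp := lt_of_le_of_ne hmem.2 hxne
      have hx0 : 0 < x := lt_trans hrm0 hx1
      have hxne0 : x ≠ 0 := ne_of_gt hx0
      have hxrn : x - rn ≠ 0 := ne_of_gt (by linarith)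
      have hxrc : x - rc ≠ 0 := ne_of_gt (by linarith)
      have hxrm : x - rm ≠ 0 := ne_of_gt (by linarith)
      have hrpx : rp - x ≠ 0 := ne_of_gt (by linarith)
      rw [hFfac x, hμ x]
      field_simp
    rw [key1]
    have key2 : (∫ r in rm..rp, 3 * σ ^ 2 / (Λ * ((b - rn) * (b - rc))) * ((b - r) * (r + d)))
        ≤ ∫ r in rm..rp, 3 / Λ * (σ ^ 2 * (b - r) * (r + d)) / ((r - rn) * (r - rc)) := by
      apply intervalIntegral.integral_mono_on hrmp.le
      · exact ((by fun_prop : Continuous fun r : ℝ =>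
          3 * σ ^ 2 / (Λ * ((b - rn) * (b - rc))) * ((b - r) * (r + d)))).intervalIntegrable _ _
      · apply ContinuousOn.intervalIntegrable
        apply ContinuousOn.div
        · fun_prop
        · fun_prop
        · intro x hx
          rw [Set.uIcc_of_le hrmp.le] at hx
          have hx1 := hx.1
          exact ne_of_gt (mul_pos (by linarith) (by linarith))
      · intro x hx
        obtain ⟨hx1, hx2⟩ := hx
        have hxrn : 0 < x - rn := by linarith
        have hxrc : 0 < x - rc := by linarith
        have hx0 : 0 < x := lt_of_lt_of_le hrm0 hx1
        rw [← sub_nonneg]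
        have he : 3 / Λ * (σ ^ 2 * (b - x) * (x + d)) / ((x - rn) * (x - rc)) -
            3 * σ ^ 2 / (Λ * ((b - rn) * (b - rc))) * ((b - x) * (x + d)) =
            3 * σ ^ 2 * (b - x) ^ 2 * (x + d) * ((b - rn) + (x - rc)) /
              (Λ * ((x - rn) * (x - rc)) * ((b - rn) * (b - rc))) := by
          field_simp
          ring
        rw [he]
        apply div_nonneg
        · have h1' : (0:ℝ) ≤ 3 * σ ^ 2 * (b - x) ^ 2 := by positivity
          have h2' : (0:ℝ) ≤ x + d := by linarith
          have h3' : (0:ℝ) ≤ (b - rn) + (x - rc) := by linarith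
          exact mul_nonneg (mul_nonneg h1' h2') h3'
        · exact le_of_lt (mul_pos (mul_pos hΛ (mul_pos hxrn hxrc)) hqb)
    refine le_trans (le_of_eq ?_) key2
    -- compute the polynomial integral
    rw [intervalIntegral.integral_const_mul]
    have hanti : ∀ x ∈ Set.uIcc rm rp,
        HasDerivAt (fun r : ℝ => b * d * r + (b - d) / 2 * r ^ 2 - 3⁻¹ * r ^ 3)
          ((b - x) * (x + d)) x := by
      intro x _
      have A1 : HasDerivAt (fun r : ℝ => b * d * r) (b * d * 1) x :=
        (hasDerivAt_id x).const_mul (b * d)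
      have A2 : HasDerivAt (fun r : ℝ => r ^ 2) (2 * x) x := by
        simpa using hasDerivAt_pow 2 x
      have A3 : HasDerivAt (fun r : ℝ => r ^ 3) (3 * x ^ 2) x := by
        simpa using hasDerivAt_pow 3 x
      have := (A1.add (A2.const_mul ((b - d) / 2))).sub (A3.const_mul (3⁻¹ : ℝ))
      refine this.congr_deriv ?_
      ring
    rw [intervalIntegral.integral_eq_sub_of_hasDerivAt hanti
      (((by fun_prop : Continuous fun r : ℝ => (b - r) * (r + d))).intervalIntegrable _ _)]
    rw [div_mul_eq_mul_div, div_eq_div_iff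
      (mul_ne_zero (mul_ne_zero (by positivity : (2 * Λ * (rp ^ 2 + rm ^ 2) ^ 2) ≠ 0) hbrnne) hbrcne)
      (mul_ne_zero hΛne hqbne)]
    rw [hσdef, hbdef, hddef]
    field_simp
    ring
  · -- positivity
    apply div_pos
    · exact mul_pos (by linarith) h2
    · exact mul_pos (mul_pos (by positivity) hbrn) hbrc
end

section
/- With I := ∫_{r_-}^{r_+} ( h(r)² − h(r_-)² ) / ( r² μ(r) ) dr, K := c²(r_+³ − r_-³)/3, a₁ := c²(r_+² − r_-²)/K, a₂ := (r_+² + r_-²)/K, b₂ := (r_+ + r_-)/K, and b₁ := ( c²(r_+ − r_-) + I )/K − m₀²/c² for any m₀ ∈ ℝ, one has the identity ( b₁ a₂² + b₂² − b₂ a₁ a₂ ) / a₂³ = (1/(r_+² + r_-²)) ( ∫_{r_-}^{r_+} F(r)/( r² μ(r) ) dr − m₀² (r_+³ − r_-³)/3 ), where F(r) = σ̃²(r⁴ − r_-⁴) − 2σ̃(r³ − r_-³) + (r² − r_-²). (Hence the second-order imaginary part of the perturbed resonance σ₊ equals s² times the right-hand side.) -/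
open Filter MeasureTheory intervalIntegral Set Topology

lemma tendsto_div_of_deriv {f g : ℝ → ℝ} {x a b : ℝ}
    (hf : HasDerivAt f a x) (hg : HasDerivAt g b x)
    (hf0 : f x = 0) (hg0 : g x = 0) (hb : b ≠ 0) :
    Tendsto (fun r => f r / g r) (𝓝[≠] x) (𝓝 (a / b)) := by
  have h1 := hasDerivAt_iff_tendsto_slope.mp hf
  have h2 := hasDerivAt_iff_tendsto_slope.mp hg
  refine (h1.div h2 hb).congr' ?_
  filter_upwards [self_mem_nhdsWithin] with r hr
  have hrx : r - x ≠ 0 := sub_ne_zero.mpr hr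
  show slope f x r / slope g x r = f r / g r
  rw [slope_def_field, slope_def_field, hf0, hg0, sub_zero, sub_zero,
    div_div_div_cancel_right₀ hrx]

lemma key_integrable (rm rp : ℝ) (h0 : 0 < rm) (hlt : rm < rp)
    (g μ : ℝ → ℝ) (S : Set ℝ) (hsub : Set.Icc rm rp ⊆ S)
    (hgc : ContinuousOn g S) (hμcont : ContinuousOn μ S)
    (hgm : HasDerivAt g (deriv g rm) rm) (hgp : HasDerivAt g (deriv g rp) rp)
    (hμm : HasDerivAt μ (deriv μ rm) rm) (hμp : HasDerivAt μ (deriv μ rp) rp)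
    (hg0m : g rm = 0) (hg0p : g rp = 0) (hμ0m : μ rm = 0) (hμ0p : μ rp = 0)
    (hμm' : deriv μ rm ≠ 0) (hμp' : deriv μ rp ≠ 0)
    (hμpos : ∀ r ∈ Set.Ioo rm rp, μ r ≠ 0) :
    IntervalIntegrable (fun r => g r / (r ^ 2 * μ r)) volume rm rp := by
  set q : ℝ → ℝ := fun r => g r / μ r with hq
  -- bounds near the endpoints
  have tm : Tendsto q (𝓝[≠] rm) (𝓝 (deriv g rm / deriv μ rm)) :=
    tendsto_div_of_deriv hgm hμm hg0m hμ0m hμm'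
  have tp : Tendsto q (𝓝[≠] rp) (𝓝 (deriv g rp / deriv μ rp)) :=
    tendsto_div_of_deriv hgp hμp hg0p hμ0p hμp'
  have hev1 : ∀ᶠ r in 𝓝[≠] rm, |q r| ≤ |deriv g rm / deriv μ rm| + 1 :=
    tm.abs.eventually (eventually_le_nhds (lt_add_one _))
  have hev2 : ∀ᶠ r in 𝓝[≠] rp, |q r| ≤ |deriv g rp / deriv μ rp| + 1 :=
    tp.abs.eventually (eventually_le_nhds (lt_add_one _))
  rw [eventually_nhdsWithin_iff, Metric.eventually_nhds_iff] at hev1 hev2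
  obtain ⟨ε₁, hε₁, H₁⟩ := hev1
  obtain ⟨ε₂, hε₂, H₂⟩ := hev2
  -- bound on the middle compact piece
  have hIooS : Set.Ioo rm rp ⊆ S := fun r hr => hsub ⟨hr.1.le, hr.2.le⟩
  have hqc : ContinuousOn q (Set.Ioo rm rp) :=
    (hgc.mono hIooS).div (hμcont.mono hIooS) hμpos
  set T : Set ℝ := Set.Icc rm rp ∩ (Metric.ball rm ε₁ ∪ Metric.ball rp ε₂)ᶜ with hT
  have hTcompact : IsCompact T :=
    isCompact_Icc.inter_right (Metric.isOpen_ball.union Metric.isOpen_ball).isClosed_compl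
  have hTsub : T ⊆ Set.Ioo rm rp := by
    rintro r ⟨⟨h1, h2⟩, h3⟩
    simp only [Set.mem_compl_iff, Set.mem_union, Metric.mem_ball, not_or, not_lt] at h3
    constructor
    · rcases eq_or_lt_of_le h1 with rfl | h
      · have := h3.1; rw [dist_self] at this; linarith
      · exact h
    · rcases eq_or_lt_of_le h2 with rfl | h
      · have := h3.2; rw [dist_self] at this; linarith
      · exact h
  obtain ⟨C, hC⟩ := hTcompact.exists_bound_of_continuousOn (hqc.mono hTsub)
  -- the global bound
  set M : ℝ := max (max (|deriv g rm / deriv μ rm| + 1) (|deriv g rp / deriv μ rp| + 1)) (max C 0)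
    with hM
  have hM0 : 0 ≤ M := le_trans (le_max_right C 0) (le_max_right _ _)
  have hbound : ∀ r ∈ Set.Ioo rm rp, |q r| ≤ M := by
    intro r hr
    by_cases hb1 : r ∈ Metric.ball rm ε₁
    · exact le_trans (H₁ (Metric.mem_ball.mp hb1) (ne_of_gt hr.1))
        (le_trans (le_max_left _ _) (le_max_left _ _))
    · by_cases hb2 : r ∈ Metric.ball rp ε₂
      · exact le_trans (H₂ (Metric.mem_ball.mp hb2) (ne_of_lt hr.2))
          (le_trans (le_max_right _ _) (le_max_left _ _))
      · have hrT : r ∈ T := ⟨⟨hr.1.le, hr.2.le⟩, by simp only [Set.mem_compl_iff, Set.mem_union, not_or]; exact ⟨hb1, hb2⟩⟩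
        exact le_trans (by simpa [Real.norm_eq_abs] using hC r hrT)
          (le_trans (le_max_left C 0) (le_max_right _ _))
  -- integrability
  rw [intervalIntegrable_iff_integrableOn_Ioo_of_le hlt.le]
  have hfc : ContinuousOn (fun r => g r / (r ^ 2 * μ r)) (Set.Ioo rm rp) := by
    refine (hgc.mono hIooS).div (ContinuousOn.mul (by fun_prop) (hμcont.mono hIooS)) ?_
    intro r hr
    exact mul_ne_zero (pow_ne_zero 2 (ne_of_gt (lt_trans h0 hr.1))) (hμpos r hr)
  refine ⟨hfc.aestronglyMeasurable measurableSet_Ioo, ?_⟩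
  apply HasFiniteIntegral.restrict_of_bounded (C := M / rm ^ 2)
  · exact measure_Ioo_lt_top
  · filter_upwards [ae_restrict_mem measurableSet_Ioo] with r hr
    have hrpos : (0:ℝ) < r := lt_trans h0 hr.1
    have hr2 : rm ^ 2 ≤ r ^ 2 := by nlinarith [hr.1]
    have : g r / (r ^ 2 * μ r) = q r / r ^ 2 := by
      rw [hq, div_div, mul_comm]
    rw [Real.norm_eq_abs, this, abs_div, abs_of_pos (by positivity : (0:ℝ) < r ^ 2)]
    exact div_le_div₀ hM0 (hbound r hr) (by positivity) hr2

/-- with `I = ∫ (h² − h(r₋)²)/(r²μ)`, `K = c²(r₊³−r₋³)/3`,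
`a₁ = c²(r₊²−r₋²)/K`, `a₂ = (r₊²+r₋²)/K`, `b₂ = (r₊+r₋)/K`,
`b₁ = (c²(r₊−r₋) + I)/K − m₀²/c²`, one has
`(b₁a₂² + b₂² − b₂a₁a₂)/a₂³ = (1/(r₊²+r₋²))(∫ F/(r²μ) − m₀²(r₊³−r₋³)/3)`. -/
theorem stmt16 (rm rp η₀ c : ℝ) (hrm : 0 < rm) (hrmp : rm < rp) (hη : 0 < η₀)
    (J : Set ℝ) (hJ : J = Set.Ioo (rm - η₀) (rp + η₀))
    (μ ν : ℝ → ℝ) (hμ : ContDiffOn ℝ (⊤ : ℕ∞) μ J)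
    (hμm : μ rm = 0) (hμp : μ rp = 0)
    (hμm' : deriv μ rm ≠ 0) (hμp' : deriv μ rp ≠ 0)
    (hμpos : ∀ r ∈ Set.Ioo rm rp, 0 < μ r)
    (hμne : ∀ r ∈ J \ Set.Icc rm rp, μ r ≠ 0)
    (hc : 0 < c) (hμc : ∀ r ∈ J, 0 ≤ 1 - μ r * c ^ 2)
    (hν : ContDiffOn ℝ (⊤ : ℕ∞) ν J)
    (hν2 : ∀ r ∈ J, ν r ^ 2 = 1 - μ r * c ^ 2) (hνm : ν rm = 1) (hνp : ν rp = -1)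
    (σt : ℝ) (hσt : σt = (rp + rm) / (rp ^ 2 + rm ^ 2))
    (h : ℝ → ℝ) (hh : ∀ r, h r = r ^ 2 * ν r * (σt - 1 / r))
    (F : ℝ → ℝ)
    (hF : ∀ r, F r = σt ^ 2 * (r ^ 4 - rm ^ 4) - 2 * σt * (r ^ 3 - rm ^ 3) + (r ^ 2 - rm ^ 2))
    (m₀ : ℝ)
    (I K a₁ a₂ b₁ b₂ : ℝ)
    (hI : I = ∫ r in rm..rp, (h r ^ 2 - h rm ^ 2) / (r ^ 2 * μ r))
    (hK : K = c ^ 2 * (rp ^ 3 - rm ^ 3) / 3)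
    (ha₁ : a₁ = c ^ 2 * (rp ^ 2 - rm ^ 2) / K)
    (ha₂ : a₂ = (rp ^ 2 + rm ^ 2) / K)
    (hb₂ : b₂ = (rp + rm) / K)
    (hb₁ : b₁ = (c ^ 2 * (rp - rm) + I) / K - m₀ ^ 2 / c ^ 2) :
    (b₁ * a₂ ^ 2 + b₂ ^ 2 - b₂ * a₁ * a₂) / a₂ ^ 3 =
      (1 / (rp ^ 2 + rm ^ 2)) *
        ((∫ r in rm..rp, F r / (r ^ 2 * μ r)) - m₀ ^ 2 * (rp ^ 3 - rm ^ 3) / 3) := by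
  have hrp : 0 < rp := lt_trans hrm hrmp
  have hQ : 0 < rp ^ 2 + rm ^ 2 := by positivity
  have hJopen : IsOpen J := by rw [hJ]; exact isOpen_Ioo
  have hIccJ : Set.Icc rm rp ⊆ J := by
    rw [hJ]; intro r hr; exact ⟨by linarith [hr.1], by linarith [hr.2]⟩
  have hrmJ : rm ∈ J := hIccJ ⟨le_refl _, hrmp.le⟩
  have hrpJ : rp ∈ J := hIccJ ⟨hrmp.le, le_refl _⟩
  have hIooJ : Set.Ioo rm rp ⊆ J := fun r hr => hIccJ ⟨hr.1.le, hr.2.le⟩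
  -- smooth versions
  set g : ℝ → ℝ := fun r => (ν r * (σt * r ^ 2 - r)) ^ 2 - (σt * rm ^ 2 - rm) ^ 2 with hg
  have hσQ : σt * (rp ^ 2 + rm ^ 2) - (rp + rm) = 0 := by
    rw [hσt]; field_simp; ring
  have hg0m : g rm = 0 := by simp [hg, hνm]
  have hg0p : g rp = 0 := by
    show (ν rp * (σt * rp ^ 2 - rp)) ^ 2 - (σt * rm ^ 2 - rm) ^ 2 = 0
    rw [hνp]
    linear_combination (σt * (rp ^ 2 - rm ^ 2) - (rp - rm)) * hσQ
  have hνd : ∀ x ∈ J, DifferentiableAt ℝ ν x := fun x hx =>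
    (hν.differentiableOn (by simp)).differentiableAt (hJopen.mem_nhds hx)
  have hμd : ∀ x ∈ J, DifferentiableAt ℝ μ x := fun x hx =>
    (hμ.differentiableOn (by simp)).differentiableAt (hJopen.mem_nhds hx)
  have hgd : ∀ x ∈ J, DifferentiableAt ℝ g x := by
    intro x hx
    exact (((hνd x hx).mul (by fun_prop)).pow 2).sub_const _
  have hgcont : ContinuousOn g J :=
    (((hν.continuousOn.mul (by fun_prop)).pow 2).sub continuousOn_const)
  -- integrability of the g-quotient
  have Hgint : IntervalIntegrable (fun r => g r / (r ^ 2 * μ r)) volume rm rp :=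
    key_integrable rm rp hrm hrmp g μ J hIccJ hgcont hμ.continuousOn
      ((hgd rm hrmJ).hasDerivAt) ((hgd rp hrpJ).hasDerivAt)
      ((hμd rm hrmJ).hasDerivAt) ((hμd rp hrpJ).hasDerivAt)
      hg0m hg0p hμm hμp hμm' hμp' (fun r hr => (hμpos r hr).ne')
  -- the original integrand agrees with the g-quotient on `Ioo rm rp`
  have hEq : Set.EqOn (fun r => (h r ^ 2 - h rm ^ 2) / (r ^ 2 * μ r))
      (fun r => g r / (r ^ 2 * μ r)) (Set.Ioo rm rp) := by
    intro r hr
    have hr0 : (0:ℝ) < r := lt_trans hrm hr.1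
    have e1 : h r = ν r * (σt * r ^ 2 - r) := by rw [hh r]; field_simp
    have e2 : h rm = σt * rm ^ 2 - rm := by rw [hh rm, hνm]; field_simp
    simp only [hg, e1, e2]
  have hfint : IntervalIntegrable (fun r => (h r ^ 2 - h rm ^ 2) / (r ^ 2 * μ r))
      volume rm rp := by
    rw [intervalIntegrable_iff_integrableOn_Ioo_of_le hrmp.le]
    exact ((intervalIntegrable_iff_integrableOn_Ioo_of_le hrmp.le).mp Hgint).congr_fun
      hEq.symm measurableSet_Ioo
  -- the polynomial part
  set P : ℝ → ℝ := fun r => c ^ 2 * (σt * r - 1) ^ 2 with hP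
  have hpcont : Continuous P := by fun_prop
  have hpint : IntervalIntegrable P volume rm rp := hpcont.intervalIntegrable rm rp
  -- pointwise identity a.e.
  have haeid : ∀ᵐ x : ℝ, x ∈ Set.uIoc rm rp →
      F x / (x ^ 2 * μ x) =
        (h x ^ 2 - h rm ^ 2) / (x ^ 2 * μ x) + P x := by
    have h1 : ∀ᵐ x : ℝ, x ∉ ({rp} : Set ℝ) :=
      compl_mem_ae_iff.mpr (measure_singleton rp)
    filter_upwards [h1] with x hx hmem
    rw [Set.uIoc_of_le hrmp.le] at hmem
    have hxIoo : x ∈ Set.Ioo rm rp := ⟨hmem.1, lt_of_le_of_ne hmem.2 (by simpa using hx)⟩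
    have hx0 : (0:ℝ) < x := lt_trans hrm hxIoo.1
    have hμx : 0 < μ x := hμpos x hxIoo
    have hνx : ν x ^ 2 = 1 - μ x * c ^ 2 := hν2 x (hIooJ hxIoo)
    have e1 : h x = ν x * (σt * x ^ 2 - x) := by rw [hh x]; field_simp
    have e2 : h rm = σt * rm ^ 2 - rm := by rw [hh rm, hνm]; field_simp
    rw [hF x, e1, e2, hP, mul_pow, hνx]
    field_simp
    ring
  -- value of the polynomial integral
  have hQder : ∀ x : ℝ, HasDerivAt
      (fun r => c ^ 2 * σt ^ 2 / 3 * r ^ 3 - c ^ 2 * σt * r ^ 2 + c ^ 2 * r) (P x) x := by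
    intro x
    have h3 := (hasDerivAt_pow 3 x).const_mul (c ^ 2 * σt ^ 2 / 3)
    have h2 := (hasDerivAt_pow 2 x).const_mul (c ^ 2 * σt)
    have h1 := (hasDerivAt_id x).const_mul (c ^ 2)
    have := (h3.sub h2).add h1
    refine this.congr_deriv ?_
    rw [hP]; push_cast; ring
  have hPint : (∫ r in rm..rp, P r) =
      (c ^ 2 * σt ^ 2 / 3 * rp ^ 3 - c ^ 2 * σt * rp ^ 2 + c ^ 2 * rp) -
      (c ^ 2 * σt ^ 2 / 3 * rm ^ 3 - c ^ 2 * σt * rm ^ 2 + c ^ 2 * rm) :=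
    intervalIntegral.integral_eq_sub_of_hasDerivAt (fun x _ => hQder x) hpint
  -- assemble the F-integral
  have hFI : (∫ r in rm..rp, F r / (r ^ 2 * μ r)) =
      I + ((c ^ 2 * σt ^ 2 / 3 * rp ^ 3 - c ^ 2 * σt * rp ^ 2 + c ^ 2 * rp) -
      (c ^ 2 * σt ^ 2 / 3 * rm ^ 3 - c ^ 2 * σt * rm ^ 2 + c ^ 2 * rm)) := by
    rw [intervalIntegral.integral_congr_ae haeid,
      intervalIntegral.integral_add hfint hpint, hPint, hI]
  -- final algebra
  have h3 : rm ^ 3 < rp ^ 3 := pow_lt_pow_left₀ hrmp hrm.le (by norm_num)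
  have hKpos : 0 < K := by
    rw [hK]; have hd : 0 < rp ^ 3 - rm ^ 3 := sub_pos.mpr h3; positivity
  have hK0 : K ≠ 0 := hKpos.ne'
  have ha₂0 : a₂ ≠ 0 := by rw [ha₂]; positivity
  have hsplit : (b₁ * a₂ ^ 2 + b₂ ^ 2 - b₂ * a₁ * a₂) / a₂ ^ 3 =
      b₁ / a₂ + (b₂ / a₂) ^ 2 * (1 / a₂) - (b₂ / a₂) * (a₁ / a₂) := by
    field_simp
  have hb2a2 : b₂ / a₂ = σt := by
    rw [hb₂, ha₂, hσt, div_div_div_cancel_right₀ hK0]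
  have ha1a2 : a₁ / a₂ = c ^ 2 * (rp ^ 2 - rm ^ 2) / (rp ^ 2 + rm ^ 2) := by
    rw [ha₁, ha₂, div_div_div_cancel_right₀ hK0]
  have hinv : 1 / a₂ = K / (rp ^ 2 + rm ^ 2) := by
    rw [ha₂, one_div, inv_div]
  have hb1a2 : b₁ / a₂ =
      (c ^ 2 * (rp - rm) + I) / (rp ^ 2 + rm ^ 2) -
        m₀ ^ 2 * K / (c ^ 2 * (rp ^ 2 + rm ^ 2)) := by
    rw [hb₁, ha₂, div_div_eq_mul_div]
    field_simp
  rw [hFI, hsplit, hb2a2, ha1a2, hinv, hb1a2, hK]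
  field_simp
  ring
end

section
/- Let a₁, b₂ ∈ ℝ, a₂ > 0, and b₁ ∈ ℝ satisfy b₁ a₂² + b₂² − b₂ a₁ a₂ > 0. Then there exist constants C₁ > 0 and s₀ > 0 such that for every real s with 0 < |s| < s₀ the quadratic equation σ² + (s a₁ + i a₂) σ + (s² b₁ + i s b₂) = 0 has a root σ₊(s) ∈ ℂ with Im σ₊(s) ≥ C₁ s² > 0. -/
/-- Key polynomial inequality. -/
lemma stmt17_key (a₁ a₂ b₁ b₂ C₁ P M s : ℝ)
    (hP : P = b₁ * a₂ ^ 2 + b₂ ^ 2 - b₂ * a₁ * a₂)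
    (hC4 : 4 * a₂ ^ 3 * C₁ = P)
    (hM : M = |(a₁^2 - 4*b₁)^2 - (a₁^2 - 4*b₁ + 8*C₁*a₂)^2 - 16*a₂^2*C₁^2|
        + |16*(a₁^2 - 4*b₁ + 8*C₁*a₂)*C₁^2| + 64*C₁^4)
    (hs1 : s^2 ≤ 1) (hs2 : (M+1) * s^2 ≤ 12*P) :
    (2*(a₂ + 2*C₁*s^2)^2 + (s^2*(a₁^2 - 4*b₁) - a₂^2))^2
      ≤ (s^2*(a₁^2 - 4*b₁) - a₂^2)^2 + (2*s*(a₁*a₂ - 2*b₂))^2 := by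
  rw [hP] at hC4
  set α := a₁^2 - 4*b₁ with hα
  set γ := α + 8*C₁*a₂ with hγ
  set K := α^2 - γ^2 - 16*a₂^2*C₁^2 with hK
  set K₂ := 16*γ*C₁^2 with hK₂
  set t := s^2 with ht
  have ht0 : 0 ≤ t := sq_nonneg s
  have hdiff : ((t*α - a₂^2)^2 + (2*s*(a₁*a₂ - 2*b₂))^2)
      - (2*(a₂ + 2*C₁*t)^2 + (t*α - a₂^2))^2
      = 12*P*t + K*t^2 - K₂*t^3 - 64*C₁^4*t^4 := by
    rw [hP]
    simp only [hK, hK₂, hγ, hα, ht]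
    linear_combination (-4*s^2) * hC4
  have ht3 : t^3 ≤ t^2 := by nlinarith
  have ht4 : t^4 ≤ t^2 := by nlinarith
  have h1 : -|K| * t^2 ≤ K * t^2 :=
    mul_le_mul_of_nonneg_right (neg_abs_le K) (sq_nonneg t)
  have h2 : K₂ * t^3 ≤ |K₂| * t^2 :=
    le_trans (mul_le_mul_of_nonneg_right (le_abs_self _) (pow_nonneg ht0 3))
      (mul_le_mul_of_nonneg_left ht3 (abs_nonneg _))
  have h3 : 64*C₁^4*t^4 ≤ 64*C₁^4*t^2 :=
    mul_le_mul_of_nonneg_left ht4 (by positivity)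
  have hMt : (|K| + |K₂| + 64*C₁^4) * t^2 ≤ 12*P*t := by
    have hM' : M = |K| + |K₂| + 64*C₁^4 := by rw [hM, hK, hK₂, hγ, hα]
    have h4 : (M+1)*t*t ≤ 12*P*t := mul_le_mul_of_nonneg_right hs2 ht0
    nlinarith [sq_nonneg t]
  linarith [hdiff, h1, h2, h3, hMt]


/-- if `b₁a₂² + b₂² − b₂a₁a₂ > 0` (with `a₂ > 0`) then for all small `s ≠ 0`
the quadratic `σ² + (sa₁ + ia₂)σ + (s²b₁ + isb₂) = 0` has a root with `Im σ ≥ C₁ s² > 0`. -/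
theorem stmt17 (a₁ a₂ b₁ b₂ : ℝ) (ha₂ : 0 < a₂)
    (hpos : 0 < b₁ * a₂ ^ 2 + b₂ ^ 2 - b₂ * a₁ * a₂) :
    ∃ C₁ > 0, ∃ s₀ > 0, ∀ s : ℝ, 0 < |s| → |s| < s₀ →
      ∃ σ : ℂ,
        σ ^ 2 + (((s * a₁ : ℝ) : ℂ) + Complex.I * (a₂ : ℝ)) * σ +
            (((s ^ 2 * b₁ : ℝ) : ℂ) + Complex.I * ((s * b₂ : ℝ) : ℂ)) = 0 ∧
        C₁ * s ^ 2 ≤ σ.im ∧ 0 < C₁ * s ^ 2 := by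
  obtain ⟨P, hP⟩ : ∃ P : ℝ, P = b₁ * a₂ ^ 2 + b₂ ^ 2 - b₂ * a₁ * a₂ := ⟨_, rfl⟩
  have hPpos : 0 < P := hP ▸ hpos
  obtain ⟨C₁, hC⟩ : ∃ C : ℝ, C = P / (4 * a₂ ^ 3) := ⟨_, rfl⟩
  have hC₁pos : 0 < C₁ := hC ▸ div_pos hPpos (by positivity)
  have hC4 : 4 * a₂ ^ 3 * C₁ = P := by rw [hC]; field_simp
  obtain ⟨M, hM⟩ : ∃ M : ℝ, M = |(a₁^2 - 4*b₁)^2 - (a₁^2 - 4*b₁ + 8*C₁*a₂)^2 - 16*a₂^2*C₁^2|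
        + |16*(a₁^2 - 4*b₁ + 8*C₁*a₂)*C₁^2| + 64*C₁^4 := ⟨_, rfl⟩
  have hM0 : 0 ≤ M := by rw [hM]; positivity
  refine ⟨C₁, hC₁pos, min 1 (Real.sqrt (12*P/(M+1))),
    lt_min one_pos (Real.sqrt_pos.mpr (by positivity)), ?_⟩
  intro s hs hss
  have hs0 : s ≠ 0 := abs_pos.mp hs
  have hCs : 0 < C₁ * s ^ 2 := by positivity
  have hs1 : s ^ 2 ≤ 1 := by
    have h := lt_of_lt_of_le hss (min_le_left _ _)
    nlinarith [abs_nonneg s, sq_abs s]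
  have hs2 : (M + 1) * s ^ 2 ≤ 12 * P := by
    have h := lt_of_lt_of_le hss (min_le_right _ _)
    have h2 : s ^ 2 < 12*P/(M+1) := by
      have := Real.sq_sqrt (le_of_lt (show (0:ℝ) < 12*P/(M+1) by positivity))
      nlinarith [abs_nonneg s, sq_abs s, Real.sqrt_nonneg (12*P/(M+1))]
    have h3 := (lt_div_iff₀ (show (0:ℝ) < M+1 by positivity)).mp h2
    nlinarith [h3]
  -- discriminant pieces
  obtain ⟨Rd, hRd⟩ : ∃ R : ℝ, R = s^2*(a₁^2 - 4*b₁) - a₂^2 := ⟨_, rfl⟩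
  obtain ⟨Id, hId⟩ : ∃ I : ℝ, I = 2*s*(a₁*a₂ - 2*b₂) := ⟨_, rfl⟩
  obtain ⟨AD, hAD⟩ : ∃ A : ℝ, A = Real.sqrt (Rd^2 + Id^2) := ⟨_, rfl⟩
  have hAD0 : 0 ≤ AD := hAD ▸ Real.sqrt_nonneg _
  have hADsq : AD^2 = Rd^2 + Id^2 := by rw [hAD]; exact Real.sq_sqrt (by positivity)
  have key := stmt17_key a₁ a₂ b₁ b₂ C₁ P M s hP hC4 hM hs1 hs2
  rw [← hRd, ← hId] at key
  have hRle : 2*(a₂ + 2*C₁*s^2)^2 + Rd ≤ AD := by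
    rcases le_or_gt (2*(a₂ + 2*C₁*s^2)^2 + Rd) 0 with h | h
    · linarith
    · nlinarith [key, hADsq, hAD0]
  obtain ⟨V, hV⟩ : ∃ V : ℝ, V = (AD - Rd)/2 := ⟨_, rfl⟩
  have hVge : (a₂ + 2*C₁*s^2)^2 ≤ V := by rw [hV]; linarith
  have hV0 : 0 ≤ V := le_trans (by positivity) hVge
  obtain ⟨v, hv⟩ : ∃ v : ℝ, v = Real.sqrt V := ⟨_, rfl⟩
  have hvge : a₂ + 2*C₁*s^2 ≤ v := hv ▸ (Real.le_sqrt (by positivity) hV0).mpr hVge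
  have hvpos : 0 < v := lt_of_lt_of_le (by positivity) hvge
  have hv2 : v^2 = V := by rw [hv]; exact Real.sq_sqrt hV0
  obtain ⟨u, hu⟩ : ∃ u : ℝ, u = Id/(2*v) := ⟨_, rfl⟩
  have huv : 2*u*v = Id := by rw [hu]; field_simp
  have hVpos : 0 < V := lt_of_lt_of_le (by positivity) hVge
  have hu2 : u^2 - v^2 = Rd := by
    have h2V : 2*V = AD - Rd := by rw [hV]; ring
    have h5 : 4*(v^2)*u^2 = Id^2 := by linear_combination (2*u*v + Id)*huv
    rw [hv2] at h5
    have h6 : 4*V*(u^2 - v^2 - Rd) = 0 := by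
      linear_combination h5 - hADsq - 4*V*hv2 - (2*V+AD+Rd)*h2V
    have := mul_eq_zero.mp h6
    rcases this with h | h
    · linarith [hVpos]
    · linarith
  refine ⟨(((-(s*a₁) + u)/2 : ℝ) : ℂ) + Complex.I * (((-a₂ + v)/2 : ℝ) : ℂ), ?_, ?_, hCs⟩
  · have hre : u^2 - v^2 = s^2*(a₁^2 - 4*b₁) - a₂^2 := hRd ▸ hu2
    have him : 2*u*v = 2*s*(a₁*a₂ - 2*b₂) := hId ▸ huv
    have hre' : (u:ℂ)^2 - (v:ℂ)^2 = (s:ℂ)^2*((a₁:ℂ)^2 - 4*b₁) - (a₂:ℂ)^2 := by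
      exact_mod_cast congrArg (Complex.ofReal) hre
    have him' : 2*(u:ℂ)*(v:ℂ) = 2*(s:ℂ)*((a₁:ℂ)*a₂ - 2*b₂) := by
      exact_mod_cast congrArg (Complex.ofReal) him
    push_cast
    linear_combination (1/4)*hre' + (Complex.I/4)*him'
      + ((((-a₂+v):ℂ)/2)^2 + (a₂:ℂ)*(((-a₂+v):ℂ)/2)) * Complex.I_sq
  · simp only [Complex.add_im, Complex.mul_im, Complex.I_re, Complex.I_im,
      Complex.ofReal_re, Complex.ofReal_im]
    norm_num
    linarith [hvge]
end

section
/- If r_+² − 2 r_+ r_- − r_-² < 0, then F(r) < 0 for every r ∈ (r_-, r_+), where F(r) = σ̃²(r⁴ − r_-⁴) − 2σ̃(r³ − r_-³) + (r² − r_-²). (In this regime the candidate growing mode has negative imaginary part for small charge product.) -/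
/-- if `r₊² − 2 r₊ r₋ − r₋² < 0` then `F < 0` on `(r₋, r₊)`. -/
theorem stmt18 (rm rp : ℝ) (hrm : 0 < rm) (hrmp : rm < rp)
    (σt : ℝ) (hσt : σt = (rp + rm) / (rp ^ 2 + rm ^ 2))
    (F : ℝ → ℝ)
    (hF : ∀ r, F r = σt ^ 2 * (r ^ 4 - rm ^ 4) - 2 * σt * (r ^ 3 - rm ^ 3) + (r ^ 2 - rm ^ 2))
    (hneg : rp ^ 2 - 2 * rp * rm - rm ^ 2 < 0) :
    ∀ r ∈ Set.Ioo rm rp, F r < 0 := by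
  intro r hr
  obtain ⟨h1, h2⟩ := hr
  have hd : (0:ℝ) < rp ^ 2 + rm ^ 2 := by positivity
  have hr1 : 0 < r - rm := by linarith
  have hr2 : 0 < rp - r := by linarith
  -- Q(r) = (rp+rm)²r² − (rp+rm)(rp−rm)²r − rp·rm·(rp−rm)² is positive on (rm, rp)
  have hQ : 0 < (rp + rm) ^ 2 * r ^ 2 - (rp + rm) * (rp - rm) ^ 2 * r
      - rp * rm * (rp - rm) ^ 2 := by
    have hQm : 0 < -2 * rp * rm * (rp ^ 2 - 2 * rp * rm - rm ^ 2) := by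
      have hrp : 0 < rp := hrm.trans hrmp
      have : 0 < rp * rm := mul_pos hrp hrm
      nlinarith
    have hslope : 0 < (rp + rm) * (r + rm) - (rp - rm) ^ 2 := by nlinarith
    nlinarith [mul_pos hr1 hslope]
  -- F r * d² = (r−rm)(rp−r)(−Q)
  have key : F r * (rp ^ 2 + rm ^ 2) ^ 2 =
      -((r - rm) * (rp - r) * ((rp + rm) ^ 2 * r ^ 2
        - (rp + rm) * (rp - rm) ^ 2 * r - rp * rm * (rp - rm) ^ 2)) := by
    rw [hF, hσt]
    field_simp
    ring
  have hlt : F r * (rp ^ 2 + rm ^ 2) ^ 2 < 0 := by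
    rw [key]
    have := mul_pos (mul_pos hr1 hr2) hQ
    linarith
  by_contra h
  push_neg at h
  nlinarith [sq_nonneg (rp ^ 2 + rm ^ 2)]
end
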